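/- arXiv:math/0102210 — 11 statements merged into one kernel-verified Lean document; each statement's English description precedes it below -/
import Mathlib

section
/- Let G be a bipartite graph on vertex classes of sizes v and w with e edges, containing no cycle of length 4 or 6. If v ≥ ⌊w^2/4⌋, then e ≤ v + ⌊w^2/4⌋. -/
/-!
For each left vertex `x`, list its neighbourhood `N x` in increasing order and join consecutive
elements by an edge of an auxiliary graph `H` on the right class, so that `x` contributes
`deg x - 1` edges. Without 4-cycles two sets `N x` share at most one element, so no edge of `H`
is contributed twice and `e - v ≤ |E(H)|`. A triangle `p < m < q` of `H` comes from
`p, m ∈ N x`, `m, q ∈ N y` and consecutive `p, q ∈ N z`; then `m ∉ N z`, so `z ≠ x, y`, and we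
get a 4-cycle if `x = y` and a 6-cycle otherwise. Mantel's theorem gives `|E(H)| ≤ ⌊w²/4⌋`.
-/

open Finset

namespace Finset

variable {α : Type*} [LinearOrder α]

def consecutivePairs (s : Finset α) : Finset (α × α) :=
  {p ∈ s ×ˢ s | p.1 < p.2 ∧ ∀ d ∈ s, p.1 < d → p.2 ≤ d}

theorem mem_consecutivePairs {s : Finset α} {a b : α} :
    (a, b) ∈ s.consecutivePairs ↔ a ∈ s ∧ b ∈ s ∧ a < b ∧ ∀ d ∈ s, a < d → b ≤ d := by
  simp [consecutivePairs, and_assoc]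

theorem card_le_card_consecutivePairs_add_one (s : Finset α) :
    #s ≤ #s.consecutivePairs + 1 := by
  induction s using Finset.induction_on_max with
  | empty => simp
  | insert a s has ih =>
    rcases s.eq_empty_or_nonempty with rfl | hs
    · simp
    have ha : a ∉ s := fun h => lt_irrefl a (has a h)
    have hnew : (s.max' hs, a) ∉ s.consecutivePairs := fun h => ha (mem_consecutivePairs.1 h).2.1
    have hsub : insert (s.max' hs, a) s.consecutivePairs ⊆ (insert a s).consecutivePairs := by
      refine insert_subset_iff.2 ⟨mem_consecutivePairs.2 ⟨mem_insert_of_mem (s.max'_mem hs),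
        mem_insert_self _ _, has _ (s.max'_mem hs), fun d hd hlt => ?_⟩, fun ⟨p, q⟩ h => ?_⟩
      · rcases mem_insert.1 hd with rfl | hd
        · exact le_rfl
        · exact absurd (s.le_max' d hd) (not_le.2 hlt)
      · obtain ⟨hp, hq, hpq, hnext⟩ := mem_consecutivePairs.1 h
        refine mem_consecutivePairs.2 ⟨mem_insert_of_mem hp, mem_insert_of_mem hq, hpq, ?_⟩
        intro d hd hlt
        rcases mem_insert.1 hd with rfl | hd
        · exact (has q hq).le
        · exact hnext d hd hlt
    calc #(insert a s) = #s + 1 := card_insert_of_notMem ha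
      _ ≤ #s.consecutivePairs + 1 + 1 := by omega
      _ = #(insert (s.max' hs, a) s.consecutivePairs) + 1 := by rw [card_insert_of_notMem hnew]
      _ ≤ #(insert a s).consecutivePairs + 1 := by grw [hsub]

end Finset

namespace SimpleGraph

theorem card_edgeFinset_le_of_cliqueFree_three {V : Type*} [Fintype V] {G : SimpleGraph V}
    [DecidableRel G.Adj] (h : G.CliqueFree 3) : #G.edgeFinset ≤ Fintype.card V ^ 2 / 4 := by
  refine (CliqueFree.card_edgeFinset_le (r := 2) h).trans ?_
  rw [Nat.choose_eq_zero_of_lt (Nat.mod_lt _ two_pos), add_zero, Nat.add_one_sub_one, mul_one]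
  exact Nat.div_le_div_right (Nat.sub_le _ _)

theorem cliqueFree_three_of_forall_lt {α : Type*} [LinearOrder α] {G : SimpleGraph α}
    (h : ∀ ⦃p m q⦄, p < m → m < q → G.Adj p m → G.Adj m q → G.Adj p q → False) :
    G.CliqueFree 3 := by
  intro s hs
  classical
  obtain ⟨a, b, c, hab, hac, hbc, -⟩ := is3Clique_iff.1 hs
  rcases lt_or_gt_of_ne hab.ne with h₁ | h₁ <;> rcases lt_or_gt_of_ne hac.ne with h₂ | h₂ <;>
    rcases lt_or_gt_of_ne hbc.ne with h₃ | h₃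
  · exact h h₁ h₃ hab hbc hac
  · exact h h₂ h₃ hac hbc.symm hab
  · exact lt_irrefl a (h₁.trans (h₃.trans h₂))
  · exact h h₂ h₁ hac.symm hab hbc.symm
  · exact h h₁ h₂ hab.symm hac hbc
  · exact lt_irrefl b (h₁.trans (h₂.trans h₃))
  · exact h h₃ h₂ hbc hac.symm hab.symm
  · exact h h₃ h₁ hbc.symm hab.symm hac.symm

section ConsecutiveGraph

variable {ι α : Type*} [LinearOrder α]

def consecutiveGraph (N : ι → Finset α) : SimpleGraph α :=
  fromRel fun a b => ∃ i, (a, b) ∈ (N i).consecutivePairs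

theorem consecutiveGraph_adj_of_lt {N : ι → Finset α} {a b : α} (hab : a < b) :
    (consecutiveGraph N).Adj a b ↔ ∃ i, (a, b) ∈ (N i).consecutivePairs := by
  refine ⟨fun ⟨_, h⟩ => h.resolve_right ?_, fun h => ⟨hab.ne, .inl h⟩⟩
  rintro ⟨i, hi⟩
  exact lt_asymm hab (mem_consecutivePairs.1 hi).2.2.1

variable (N : ι → Finset α)

def IsLinearFamily : Prop :=
  Pairwise fun i j => ∀ ⦃a b⦄, a ∈ N i → b ∈ N i → a ∈ N j → b ∈ N j → a = b

def HasNoBergeTriangle : Prop :=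
  ∀ ⦃i j k⦄, i ≠ j → i ≠ k → j ≠ k → ∀ ⦃a b c⦄, a ≠ b → a ≠ c → b ≠ c →
    a ∈ N i → b ∈ N i → b ∈ N j → c ∈ N j → c ∈ N k → a ∈ N k → False

variable {N}

theorem cliqueFree_three_consecutiveGraph (hlin : IsLinearFamily N) (htri : HasNoBergeTriangle N) :
    (consecutiveGraph N).CliqueFree 3 := by
  refine cliqueFree_three_of_forall_lt fun p m q hpm hmq hpm' hmq' hpq' => ?_
  obtain ⟨i, hi⟩ := (consecutiveGraph_adj_of_lt hpm).1 hpm'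
  obtain ⟨j, hj⟩ := (consecutiveGraph_adj_of_lt hmq).1 hmq'
  obtain ⟨k, hk⟩ := (consecutiveGraph_adj_of_lt (hpm.trans hmq)).1 hpq'
  obtain ⟨hpi, hmi, -⟩ := mem_consecutivePairs.1 hi
  obtain ⟨hmj, hqj, -⟩ := mem_consecutivePairs.1 hj
  obtain ⟨hpk, hqk, -, hnext⟩ := mem_consecutivePairs.1 hk
  have hmk : m ∉ N k := fun h => not_le.2 hmq (hnext m h hpm)
  have hik : i ≠ k := by rintro rfl; exact hmk hmi
  have hjk : j ≠ k := by rintro rfl; exact hmk hmj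
  by_cases hij : i = j
  · subst hij
    exact (hpm.trans hmq).ne (hlin hik hpi hqj hpk hqk)
  · exact htri hij hik hjk hpm.ne (hpm.trans hmq).ne hmq.ne hpi hmi hmj hqj hqk hpk

theorem sum_card_le_card_add_card_edgeFinset_consecutiveGraph [Fintype ι] [Fintype α]
    [DecidableRel (consecutiveGraph N).Adj] (hlin : IsLinearFamily N) :
    ∑ i, #(N i) ≤ Fintype.card ι + #(consecutiveGraph N).edgeFinset := by
  have hinj : Set.InjOn (fun p : (_ : ι) × (α × α) => s(p.2.1, p.2.2))
      (univ.sigma fun i => (N i).consecutivePairs) := by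
    rintro ⟨i, a, b⟩ hi ⟨j, a', b'⟩ hj heq
    obtain ⟨hai, hbi, hab, -⟩ := mem_consecutivePairs.1 (mem_sigma.1 hi).2
    obtain ⟨haj, hbj, hab', -⟩ := mem_consecutivePairs.1 (mem_sigma.1 hj).2
    obtain ⟨rfl, rfl⟩ | ⟨rfl, rfl⟩ := Sym2.eq_iff.1 heq
    · obtain rfl : i = j := by
        by_contra hij
        exact hab.ne (hlin hij hai hbi haj hbj)
      rfl
    · exact absurd (hab.trans hab') (lt_irrefl _)
  have hmaps : Set.MapsTo (fun p : (_ : ι) × (α × α) => s(p.2.1, p.2.2))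
      (univ.sigma fun i => (N i).consecutivePairs) (consecutiveGraph N).edgeFinset := by
    rintro ⟨i, a, b⟩ hi
    replace hi := (mem_sigma.1 hi).2
    simpa using (consecutiveGraph_adj_of_lt (mem_consecutivePairs.1 hi).2.2.1).2 ⟨i, hi⟩
  calc ∑ i, #(N i) ≤ ∑ i, (#(N i).consecutivePairs + 1) :=
        sum_le_sum fun i _ => card_le_card_consecutivePairs_add_one _
    _ = #(univ.sigma fun i => (N i).consecutivePairs) + Fintype.card ι := by
        rw [sum_add_distrib, card_sigma, sum_const, card_univ, smul_eq_mul, mul_one]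
    _ ≤ #(consecutiveGraph N).edgeFinset + Fintype.card ι := by
        grw [card_le_card_of_injOn _ hmaps hinj]
    _ = Fintype.card ι + #(consecutiveGraph N).edgeFinset := add_comm _ _

end ConsecutiveGraph

section Bipartite

variable {V W : Type*} {G : SimpleGraph (V ⊕ W)}

def rightNeighbors (G : SimpleGraph (V ⊕ W)) [Fintype W] [DecidableRel G.Adj] (x : V) :
    Finset W :=
  {a | G.Adj (.inl x) (.inr a)}

@[simp]
theorem mem_rightNeighbors [Fintype W] [DecidableRel G.Adj] {x : V} {a : W} :
    a ∈ G.rightNeighbors x ↔ G.Adj (.inl x) (.inr a) := by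
  simp [rightNeighbors]

theorem card_edgeFinset_eq_sum_card_rightNeighbors [Fintype V] [Fintype W] [DecidableRel G.Adj]
    (hbip : ∀ x y, G.Adj x y → x.isLeft ≠ y.isLeft) :
    #G.edgeFinset = ∑ x, #(G.rightNeighbors x) := by
  have hG : G.IsBipartiteWith
      (univ.map .inl : Finset (V ⊕ W)) (univ.map .inr : Finset (V ⊕ W)) := by
    refine ⟨by simp [Set.disjoint_range_iff], fun p q hpq => ?_⟩
    have := hbip p q hpq
    cases p <;> cases q <;> simp_all
  have hdeg (x : V) : G.degree (.inl x) = #(G.rightNeighbors x) := by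
    rw [← card_neighborFinset_eq_degree, isBipartiteWith_neighborFinset hG (by simp),
      filter_map, card_map]
    rfl
  rw [← isBipartiteWith_sum_degrees_eq_card_edges hG, sum_map]
  exact sum_congr rfl fun x _ => hdeg x

theorem exists_isCycle_length_four {x y : V} {a b : W} (hxy : x ≠ y) (hab : a ≠ b)
    (hxa : G.Adj (.inl x) (.inr a)) (hya : G.Adj (.inl y) (.inr a))
    (hyb : G.Adj (.inl y) (.inr b)) (hxb : G.Adj (.inl x) (.inr b)) :
    ∃ c : G.Walk (.inl x) (.inl x), c.IsCycle ∧ c.length = 4 := by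
  refine ⟨.cons hxa (.cons hya.symm (.cons hyb (.cons hxb.symm .nil))), ?_, rfl⟩
  simp [Walk.isCycle_def, hxy, hxy.symm, hab]

theorem exists_isCycle_length_six {x y z : V} {a b c : W} (hxy : x ≠ y) (hxz : x ≠ z)
    (hyz : y ≠ z) (hab : a ≠ b) (hac : a ≠ c) (hbc : b ≠ c)
    (hxa : G.Adj (.inl x) (.inr a)) (hza : G.Adj (.inl z) (.inr a))
    (hzc : G.Adj (.inl z) (.inr c)) (hyc : G.Adj (.inl y) (.inr c))
    (hyb : G.Adj (.inl y) (.inr b)) (hxb : G.Adj (.inl x) (.inr b)) :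
    ∃ p : G.Walk (.inl x) (.inl x), p.IsCycle ∧ p.length = 6 := by
  refine ⟨.cons hxa (.cons hza.symm (.cons hzc (.cons hyc.symm (.cons hyb
    (.cons hxb.symm .nil))))), ?_, rfl⟩
  simp [Walk.isCycle_def, hxy, hxy.symm, hxz, hxz.symm, hyz.symm, hab, hac, hbc.symm]

variable [Fintype W] [DecidableRel G.Adj]

theorem isLinearFamily_rightNeighbors (h4 : ∀ (x) (c : G.Walk x x), c.IsCycle → c.length ≠ 4) :
    IsLinearFamily G.rightNeighbors := by
  intro x y hxy a b hxa hxb hya hyb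
  by_contra hab
  obtain ⟨c, hc, hlen⟩ := exists_isCycle_length_four hxy hab (mem_rightNeighbors.1 hxa)
    (mem_rightNeighbors.1 hya) (mem_rightNeighbors.1 hyb) (mem_rightNeighbors.1 hxb)
  exact h4 _ c hc hlen

theorem hasNoBergeTriangle_rightNeighbors
    (h6 : ∀ (x) (c : G.Walk x x), c.IsCycle → c.length ≠ 6) :
    HasNoBergeTriangle G.rightNeighbors := by
  intro x y z hxy hxz hyz a b c hab hac hbc hxa hxb hyb hyc hzc hza
  obtain ⟨p, hp, hlen⟩ := exists_isCycle_length_six hxy hxz hyz hab hac hbc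
    (mem_rightNeighbors.1 hxa) (mem_rightNeighbors.1 hza) (mem_rightNeighbors.1 hzc)
    (mem_rightNeighbors.1 hyc) (mem_rightNeighbors.1 hyb) (mem_rightNeighbors.1 hxb)
  exact h6 _ p hp hlen

end Bipartite

end SimpleGraph

open SimpleGraph

theorem stmt_1_general (v w : ℕ) (G : SimpleGraph (Fin v ⊕ Fin w)) [DecidableRel G.Adj]
    (hbip : ∀ x y, G.Adj x y → x.isLeft ≠ y.isLeft)
    (h4 : ∀ (x) (c : G.Walk x x), c.IsCycle → c.length ≠ 4)
    (h6 : ∀ (x) (c : G.Walk x x), c.IsCycle → c.length ≠ 6)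
    (e : ℕ) (he : e = G.edgeFinset.card) :
    e ≤ v + w^2 / 4 := by
  classical
  have hlin := isLinearFamily_rightNeighbors h4
  have hK3 := cliqueFree_three_consecutiveGraph hlin (hasNoBergeTriangle_rightNeighbors h6)
  calc e = ∑ x, #(G.rightNeighbors x) := he.trans (card_edgeFinset_eq_sum_card_rightNeighbors hbip)
    _ ≤ v + #(consecutiveGraph G.rightNeighbors).edgeFinset := by
      simpa using sum_card_le_card_add_card_edgeFinset_consecutiveGraph hlin
    _ ≤ v + w ^ 2 / 4 := by
      simpa using Nat.add_le_add_left (card_edgeFinset_le_of_cliqueFree_three hK3) v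

theorem stmt_1 (v w : ℕ) (G : SimpleGraph (Fin v ⊕ Fin w)) [DecidableRel G.Adj]
    (hbip : ∀ x y, G.Adj x y → x.isLeft ≠ y.isLeft)
    (h4 : ∀ (x) (c : G.Walk x x), c.IsCycle → c.length ≠ 4)
    (h6 : ∀ (x) (c : G.Walk x x), c.IsCycle → c.length ≠ 6)
    (e : ℕ) (he : e = G.edgeFinset.card)
    (hvw : v ≥ w^2 / 4) :
    e ≤ v + w^2 / 4 :=
  stmt_1_general v w G hbip h4 h6 e he
end

section
/- Let G be a bipartite graph on vertex classes of sizes v and w containing no cycle of length 4 or 6. If w > ⌊v^2/4⌋, then G has at least ⌈w - v^2/4⌉ vertices in the class of size w of degree 0 or 1. -/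
/-!
Every `b ∈ W` of degree at least two picks two of its neighbours, an edge of a graph `H` on `V`.
Two vertices of `W` with the same pair would span a 4-cycle, so `H` has as many edges as there
are such `b`; a triangle of `H` would lift to a 6-cycle, so by Mantel `H` has at most `v² / 4`
edges. All other vertices of `W` have degree at most one.
-/

open Finset Fintype Function Sum

namespace SimpleGraph

variable {V : Type*} (G : SimpleGraph V)

theorem exists_isCycle_length_four_s4 {a b c d : V}
    (hab : G.Adj a b) (hbc : G.Adj b c) (hcd : G.Adj c d) (hda : G.Adj d a)
    (hac : a ≠ c) (hbd : b ≠ d) :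
    ∃ (x : V) (p : G.Walk x x), p.IsCycle ∧ p.length = 4 := by
  refine ⟨a, .cons hab (.cons hbc (.cons hcd (.cons hda .nil))), ?_, rfl⟩
  have := hab.ne; have := hbc.ne; have := hcd.ne; have := hda.ne
  simp [Walk.isCycle_def, Walk.isTrail_def, *]
  aesop

theorem exists_isCycle_length_six_s4 {a b c d e f : V}
    (hab : G.Adj a b) (hbc : G.Adj b c) (hcd : G.Adj c d) (hde : G.Adj d e)
    (hef : G.Adj e f) (hfa : G.Adj f a)
    (hac : a ≠ c) (hae : a ≠ e) (hce : c ≠ e) (hbd : b ≠ d) (hbf : b ≠ f) (hdf : d ≠ f)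
    (had : a ≠ d) (hbe : b ≠ e) (hcf : c ≠ f) :
    ∃ (x : V) (p : G.Walk x x), p.IsCycle ∧ p.length = 6 := by
  refine ⟨a, .cons hab (.cons hbc (.cons hcd (.cons hde (.cons hef (.cons hfa .nil))))), ?_,
    rfl⟩
  have := hab.ne; have := hbc.ne; have := hcd.ne; have := hde.ne; have := hef.ne; have := hfa.ne
  simp [Walk.isCycle_def, Walk.isTrail_def, *]
  aesop

theorem four_mul_card_edgeFinset_le_sq [Fintype V] [Fintype G.edgeSet] (hG : G.CliqueFree 3) :
    4 * #G.edgeFinset ≤ card V ^ 2 := by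
  classical
  have hfree : (⊤ : SimpleGraph (Fin 3)).Free G := cliqueFree_iff_top_free.mp (by simpa using hG)
  have hext : #G.edgeFinset ≤ extremalNumber (card V) (⊤ : SimpleGraph (Fin 3)) := by
    convert card_edgeFinset_le_extremalNumber hfree
  rw [extremalNumber_top, Fintype.card_fin] at hext
  have hturan : 2 * 2 * #(turanGraph (card V) (3 - 1)).edgeFinset ≤ (2 - 1) * card V ^ 2 :=
    mul_card_edgeFinset_turanGraph_le
  omega

section Bipartite

variable {α β : Type*} {G : SimpleGraph (α ⊕ β)}

theorem eq_of_two_common_neighbors (h4 : ∀ (x) (c : G.Walk x x), c.IsCycle → c.length ≠ 4)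
    {x y : α} (hxy : x ≠ y) {b b' : β}
    (hbx : G.Adj (inr b) (inl x)) (hby : G.Adj (inr b) (inl y))
    (hb'x : G.Adj (inr b') (inl x)) (hb'y : G.Adj (inr b') (inl y)) : b = b' := by
  by_contra hbb'
  obtain ⟨_, c, hc, hlen⟩ :=
    G.exists_isCycle_length_four_s4 hbx hb'x.symm hb'y hby.symm (by simpa) (by simpa)
  exact h4 _ c hc hlen

theorem cliqueFree_three_fromEdgeSet_range
    (h6 : ∀ (x) (c : G.Walk x x), c.IsCycle → c.length ≠ 6)
    {ι : Type*} {b : ι → β} (hb : Injective b) {p : ι → Sym2 α}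
    (hp : ∀ i, ∀ x ∈ p i, G.Adj (inr (b i)) (inl x)) :
    (fromEdgeSet (Set.range p)).CliqueFree 3 := by
  classical
  intro s hs
  obtain ⟨x, y, z, hxy, hxz, hyz, -⟩ := is3Clique_iff.mp hs
  rw [fromEdgeSet_adj] at hxy hxz hyz
  obtain ⟨⟨i, hi⟩, hxy⟩ := hxy
  obtain ⟨⟨j, hj⟩, hyz⟩ := hyz
  obtain ⟨⟨k, hk⟩, hxz⟩ := hxz
  have hij : b i ≠ b j := hb.ne fun h ↦ by subst h; rw [hi, Sym2.eq_iff] at hj; grind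
  have hik : b i ≠ b k := hb.ne fun h ↦ by subst h; rw [hi, Sym2.eq_iff] at hk; grind
  have hjk : b j ≠ b k := hb.ne fun h ↦ by subst h; rw [hj, Sym2.eq_iff] at hk; grind
  obtain ⟨_, c, hc, hlen⟩ := G.exists_isCycle_length_six_s4
    (hp i x (by simp [hi])).symm (hp i y (by simp [hi])) (hp j y (by simp [hj])).symm
    (hp j z (by simp [hj])) (hp k z (by simp [hk])).symm (hp k x (by simp [hk]))
    (by simpa) (by simpa) (by simpa) (by simpa) (by simpa) (by simpa) (by simp) (by simp) (by simp)
  exact h6 _ c hc hlen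

theorem four_mul_card_le_sq_of_two_neighbors [Fintype α]
    (h4 : ∀ (x) (c : G.Walk x x), c.IsCycle → c.length ≠ 4)
    (h6 : ∀ (x) (c : G.Walk x x), c.IsCycle → c.length ≠ 6) (S : Finset β)
    (hS : ∀ b ∈ S, ∃ x y, x ≠ y ∧ G.Adj (inr b) (inl x) ∧ G.Adj (inr b) (inl y)) :
    4 * #S ≤ card α ^ 2 := by
  classical
  choose x y hxy hx hy using fun b : S ↦ hS b b.2
  set p : S → Sym2 α := fun b ↦ s(x b, y b)
  have hp : ∀ b, ∀ a ∈ p b, G.Adj (inr b.1) (inl a) := by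
    intro b a ha
    rcases Sym2.mem_iff.mp ha with rfl | rfl
    exacts [hx b, hy b]
  have hinj : Injective p := by
    intro b b' hbb'
    have hx' : x b ∈ p b' := hbb' ▸ Sym2.mem_mk_left _ _
    have hy' : y b ∈ p b' := hbb' ▸ Sym2.mem_mk_right _ _
    exact Subtype.ext <|
      eq_of_two_common_neighbors h4 (hxy b) (hx b) (hy b) (hp b' _ hx') (hp b' _ hy')
  set H := fromEdgeSet (Set.range p)
  have hsub : univ.image p ⊆ H.edgeFinset := by
    intro e he
    obtain ⟨b, -, rfl⟩ := mem_image.mp he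
    rw [mem_edgeFinset, edgeSet_fromEdgeSet]
    exact ⟨Set.mem_range_self b, by simpa [p] using hxy b⟩
  calc 4 * #S = 4 * #(univ.image p) := by rw [card_image_of_injective _ hinj, card_univ, card_coe]
    _ ≤ 4 * #H.edgeFinset := by gcongr
    _ ≤ card α ^ 2 := H.four_mul_card_edgeFinset_le_sq <|
      cliqueFree_three_fromEdgeSet_range h6 Subtype.val_injective hp

theorem exists_ne_adj_inl_of_one_lt_degree (hbip : ∀ x y, G.Adj x y → x.isLeft ≠ y.isLeft)
    {b : β} [Fintype (G.neighborSet (inr b))] (hb : 1 < G.degree (inr b)) :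
    ∃ x y, x ≠ y ∧ G.Adj (inr b) (inl x) ∧ G.Adj (inr b) (inl y) := by
  obtain ⟨x | _, hx, y | _, hy, hxy⟩ := one_lt_card.mp hb
  · exact ⟨x, y, by simpa using hxy, by simpa using hx, by simpa using hy⟩
  all_goals simp_all

end Bipartite

end SimpleGraph

open SimpleGraph in
theorem stmt_4_general (v w : ℕ) (G : SimpleGraph (Fin v ⊕ Fin w)) [DecidableRel G.Adj]
    (hbip : ∀ x y, G.Adj x y → x.isLeft ≠ y.isLeft)
    (h4 : ∀ (x) (c : G.Walk x x), c.IsCycle → c.length ≠ 4)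
    (h6 : ∀ (x) (c : G.Walk x x), c.IsCycle → c.length ≠ 6) :
    ⌈(w : ℚ) - (v : ℚ)^2 / 4⌉ ≤
      ((Finset.univ.filter (fun b : Fin w => G.degree (Sum.inr b) ≤ 1)).card : ℤ) := by
  set L := univ.filter fun b : Fin w ↦ G.degree (inr b) ≤ 1
  set S := univ.filter fun b : Fin w ↦ 1 < G.degree (inr b)
  have hS : 4 * #S ≤ v ^ 2 := by
    simpa using four_mul_card_le_sq_of_two_neighbors h4 h6 S fun b hb ↦
      exists_ne_adj_inl_of_one_lt_degree hbip (mem_filter.mp hb).2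
  have hLS : #L + #S = w := by
    simpa [L, S] using
      card_filter_add_card_filter_not (s := univ) fun b : Fin w ↦ G.degree (inr b) ≤ 1
  rw [Int.ceil_le]
  have hLS' : (#L : ℚ) + #S = w := by exact_mod_cast hLS
  have hS' : 4 * (#S : ℚ) ≤ v ^ 2 := by exact_mod_cast hS
  push_cast
  linarith

theorem stmt_4 (v w : ℕ) (G : SimpleGraph (Fin v ⊕ Fin w)) [DecidableRel G.Adj]
    (hbip : ∀ x y, G.Adj x y → x.isLeft ≠ y.isLeft)
    (h4 : ∀ (x) (c : G.Walk x x), c.IsCycle → c.length ≠ 4)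
    (h6 : ∀ (x) (c : G.Walk x x), c.IsCycle → c.length ≠ 6)
    (hw : w > v^2 / 4) :
    ⌈(w : ℚ) - (v : ℚ)^2 / 4⌉ ≤
      ((Finset.univ.filter (fun b : Fin w => G.degree (Sum.inr b) ≤ 1)).card : ℤ) :=
  stmt_4_general v w G hbip h4 h6
end

section
/- Let G be a bipartite graph on vertex classes of sizes v ≤ w with e edges, of girth at least 6 (no 4-cycle). Then e^2 - we - vw(v-1) ≤ 0, and hence e ≤ √(vw(v-1) + w^2/4) + w/2. -/
/-!
Count the paths `a - b - a'` with both ends `a ≠ a'` in the class of size `v` and middle `b` in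
the class of size `w`. Since there is no 4-cycle, the pair `(a, a')` determines `b`, so
`∑_b d(b) (d(b) - 1) ≤ v (v - 1)`. With `∑_b d(b) = e` and Cauchy–Schwarz,
`e² ≤ w ∑_b d(b)² ≤ w (v (v - 1) + e)`; the bound on `e` is the larger root of this quadratic.
-/

open Finset

theorem Finset.natCast_card_offDiag {α R : Type*} [DecidableEq α] [Ring R] (s : Finset α) :
    (#s.offDiag : R) = #s * (#s - 1) := by
  rw [offDiag_card, Nat.cast_sub (Nat.le_mul_self _), Nat.cast_mul, mul_sub_one]

theorem Real.le_sqrt_add_of_sq_sub_mul_sub_nonpos {x b c : ℝ} (h : x ^ 2 - b * x - c ≤ 0) :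
    x ≤ √(c + b ^ 2 / 4) + b / 2 := by
  have hsq : (x - b / 2) ^ 2 ≤ c + b ^ 2 / 4 := by linarith
  linarith [le_abs_self (x - b / 2), Real.abs_le_sqrt hsq]

namespace SimpleGraph

theorem isBipartiteWith_map_inl_map_inr {α β : Type*} [Fintype α] [Fintype β]
    {G : SimpleGraph (α ⊕ β)} (h : ∀ x y, G.Adj x y → x.isLeft ≠ y.isLeft) :
    G.IsBipartiteWith (univ.map .inl : Finset (α ⊕ β)) (univ.map .inr : Finset (α ⊕ β)) where
  disjoint := by simp [Set.disjoint_left]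
  mem_of_adj x y hxy := by
    have := h x y hxy
    cases x <;> cases y <;> simp_all

variable {V : Type*} {G : SimpleGraph V}

theorem exists_isCycle_length_four_s6 {a a' b b' : V} (ha : a ≠ a') (hb : b ≠ b')
    (hab : G.Adj a b) (hba' : G.Adj b a') (ha'b' : G.Adj a' b') (hb'a : G.Adj b' a) :
    ∃ c : G.Walk a a, c.IsCycle ∧ c.length = 4 := by
  refine ⟨.cons hab (.cons hba' (.cons ha'b' (.cons hb'a .nil))), ?_, rfl⟩
  have := hab.ne; have := hba'.ne; have := ha'b'.ne; have := hb'a.ne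
  simp only [Walk.cons_isCycle_iff, Walk.isPath_def, Walk.support_cons, Walk.support_nil,
    Walk.edges_cons, Walk.edges_nil, List.nodup_cons, List.mem_cons,
    List.not_mem_nil, Sym2.eq_iff]
  grind

variable (hC4 : ∀ x (c : G.Walk x x), c.IsCycle → c.length ≠ 4)
include hC4

theorem eq_of_adj_of_noFourCycle {a a' b b' : V} (ha : a ≠ a')
    (hab : G.Adj a b) (ha'b : G.Adj a' b) (hab' : G.Adj a b') (ha'b' : G.Adj a' b') : b = b' := by
  by_contra hb
  obtain ⟨c, hc, hlen⟩ := exists_isCycle_length_four_s6 ha hb hab ha'b.symm ha'b' hab'.symm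
  exact hC4 _ c hc hlen

theorem sum_card_offDiag_neighborFinset_le [DecidableEq V] [G.LocallyFinite] {s t : Finset V}
    (hts : ∀ b ∈ t, G.neighborFinset b ⊆ s) :
    ∑ b ∈ t, #(G.neighborFinset b).offDiag ≤ #s.offDiag := by
  rw [← card_sigma]
  refine card_le_card_of_injOn (fun p => p.2) ?_ ?_
  · rintro ⟨b, a, a'⟩ hp
    simp only [coe_sigma, Set.mem_sigma_iff, mem_coe, mem_offDiag] at hp ⊢
    exact ⟨hts b hp.1 hp.2.1, hts b hp.1 hp.2.2.1, hp.2.2.2⟩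
  · rintro ⟨b, a, a'⟩ hp ⟨b', _, _⟩ hq hpq
    obtain ⟨rfl, rfl⟩ := Prod.mk.inj hpq
    simp only [coe_sigma, Set.mem_sigma_iff, mem_coe, mem_offDiag, mem_neighborFinset] at hp hq
    obtain rfl := eq_of_adj_of_noFourCycle hC4 hp.2.2.2 hp.2.1.symm hp.2.2.1.symm hq.2.1.symm
      hq.2.2.1.symm
    rfl

theorem IsBipartiteWith.card_edgeFinset_sq_le [Fintype V] [DecidableRel G.Adj]
    {s t : Finset V} (hG : G.IsBipartiteWith s t) :
    (#G.edgeFinset : ℝ) ^ 2 ≤ #t * (#s * (#s - 1) + #G.edgeFinset) := by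
  classical
  have hdeg : ∑ b ∈ t, (G.degree b : ℝ) = #G.edgeFinset := by
    exact_mod_cast isBipartiteWith_sum_degrees_eq_card_edges' hG
  have hcherries : ∑ b ∈ t, (G.degree b : ℝ) * (G.degree b - 1) ≤ #s * (#s - 1) := by
    simp_rw [← card_neighborFinset_eq_degree, ← natCast_card_offDiag]
    exact_mod_cast sum_card_offDiag_neighborFinset_le hC4
      fun b hb => isBipartiteWith_neighborFinset_subset' hG hb
  calc (#G.edgeFinset : ℝ) ^ 2 = (∑ b ∈ t, (G.degree b : ℝ)) ^ 2 := by rw [hdeg]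
    _ ≤ #t * ∑ b ∈ t, (G.degree b : ℝ) ^ 2 := sq_sum_le_card_mul_sum_sq
    _ = #t * (∑ b ∈ t, (G.degree b : ℝ) * (G.degree b - 1) + #G.edgeFinset) := by
      rw [← hdeg, ← sum_add_distrib]; ring_nf
    _ ≤ #t * (#s * (#s - 1) + #G.edgeFinset) := by gcongr

end SimpleGraph

theorem stmt_6_general (v w : ℕ) (G : SimpleGraph (Fin v ⊕ Fin w)) [DecidableRel G.Adj]
    (hbip : ∀ x y, G.Adj x y → x.isLeft ≠ y.isLeft)
    (h4 : ∀ (x) (c : G.Walk x x), c.IsCycle → c.length ≠ 4)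
    (e : ℕ) (he : e = G.edgeFinset.card) :
    (e : ℝ)^2 - w * e - v * w * (v - 1) ≤ 0 ∧
      (e : ℝ) ≤ Real.sqrt (v * w * (v - 1) + w^2 / 4) + w / 2 := by
  have hsq := (SimpleGraph.isBipartiteWith_map_inl_map_inr hbip).card_edgeFinset_sq_le h4
  simp only [card_map, card_univ, Fintype.card_fin, ← he] at hsq
  have hquad : (e : ℝ) ^ 2 - w * e - v * w * (v - 1) ≤ 0 := by linarith
  exact ⟨hquad, Real.le_sqrt_add_of_sq_sub_mul_sub_nonpos hquad⟩

theorem stmt_6 (v w : ℕ) (hvw : v ≤ w) (G : SimpleGraph (Fin v ⊕ Fin w)) [DecidableRel G.Adj]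
    (hbip : ∀ x y, G.Adj x y → x.isLeft ≠ y.isLeft)
    (h4 : ∀ (x) (c : G.Walk x x), c.IsCycle → c.length ≠ 4)
    (e : ℕ) (he : e = G.edgeFinset.card) :
    (e : ℝ)^2 - w * e - v * w * (v - 1) ≤ 0 ∧
      (e : ℝ) ≤ Real.sqrt (v * w * (v - 1) + w^2 / 4) + w / 2 :=
  stmt_6_general v w G hbip h4 e he
end

section
/- Let G be a bipartite graph on vertex classes of sizes v and w without cycles of length 4, with e edges. If w ≤ v(v-1)/2 then e ≤ √(2vw(v-1)); otherwise e ≤ v(v-1)/2 + w. -/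
open Finset SimpleGraph

theorem aux_two_choose_stmt8 (n : ℕ) : 2 * n.choose 2 = n * (n - 1) := by
  cases n with
  | zero => simp
  | succ k =>
    rw [Nat.choose_two_right, Nat.succ_sub_one, Nat.mul_div_cancel']
    rw [mul_comm]
    exact (Nat.even_mul_succ_self k).two_dvd

theorem aux_le_choose_stmt8 (n : ℕ) : n ≤ n.choose 2 + 1 := by
  induction n with
  | zero => simp
  | succ k ih =>
    rw [Nat.choose_succ_succ, Nat.choose_one_right]
    omega

theorem aux_sq_le_stmt8 (n : ℕ) : n ^ 2 ≤ 2 * n.choose 2 + n := by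
  rw [aux_two_choose_stmt8]
  cases n with
  | zero => simp
  | succ k => rw [Nat.succ_sub_one]; nlinarith

theorem stmt_8 (v w : ℕ) (G : SimpleGraph (Fin v ⊕ Fin w)) [DecidableRel G.Adj]
    (hbip : ∀ x y, G.Adj x y → x.isLeft ≠ y.isLeft)
    (h4 : ∀ (x) (c : G.Walk x x), c.IsCycle → c.length ≠ 4)
    (e : ℕ) (he : e = G.edgeFinset.card) :
    ((w : ℝ) ≤ v * (v - 1) / 2 → (e : ℝ) ≤ Real.sqrt (2 * v * w * (v - 1))) ∧
    ((w : ℝ) > v * (v - 1) / 2 → (e : ℝ) ≤ v * (v - 1) / 2 + w) := by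
  classical
  set N : Fin w → Finset (Fin v) := fun y => univ.filter fun a => G.Adj (.inl a) (.inr y)
    with hN
  -- Claim A : e = sum of right degrees
  have hsum : e = ∑ y : Fin w, (N y).card := by
    have hdegR : ∀ y : Fin w, G.degree (.inr y) = (N y).card := by
      intro y
      rw [← SimpleGraph.card_neighborFinset_eq_degree]
      have : G.neighborFinset (.inr y) = (N y).image Sum.inl := by
        ext x
        rcases x with a | b
        · simp [hN, SimpleGraph.mem_neighborFinset, adj_comm]
        · simp only [hN, SimpleGraph.mem_neighborFinset, mem_image, mem_filter]
          constructor
          · intro h; exact absurd (hbip _ _ h) (by simp)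
          · rintro ⟨a, _, h⟩; exact absurd h (by simp)
      rw [this, Finset.card_image_of_injective _ Sum.inl_injective]
    have hdegL : ∀ a : Fin v, G.degree (.inl a) =
        (univ.filter fun y : Fin w => G.Adj (.inl a) (.inr y)).card := by
      intro a
      rw [← SimpleGraph.card_neighborFinset_eq_degree]
      have : G.neighborFinset (.inl a) =
          (univ.filter fun y : Fin w => G.Adj (.inl a) (.inr y)).image Sum.inr := by
        ext x
        rcases x with b | y
        · simp only [SimpleGraph.mem_neighborFinset, mem_image, mem_filter]
          constructor
          · intro h; exact absurd (hbip _ _ h) (by simp)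
          · rintro ⟨c, _, h⟩; exact absurd h (by simp)
        · simp [SimpleGraph.mem_neighborFinset]
      rw [this, Finset.card_image_of_injective _ Sum.inr_injective]
    have hcomm : ∑ a : Fin v, (univ.filter fun y : Fin w => G.Adj (.inl a) (.inr y)).card
        = ∑ y : Fin w, (N y).card := by
      simp only [hN, Finset.card_filter]
      exact Finset.sum_comm
    have hh := G.sum_degrees_eq_twice_card_edges
    rw [Fintype.sum_sum_type] at hh
    simp only [hdegL, hdegR] at hh
    rw [hcomm] at hh
    omega
  -- Claim B : no two right vertices share two left neighbours
  have hpair : ∑ y : Fin w, (N y).card.choose 2 ≤ v.choose 2 := by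
    have hdisj : ∀ y ∈ (univ : Finset (Fin w)), ∀ z ∈ (univ : Finset (Fin w)), y ≠ z →
        Disjoint ((N y).powersetCard 2) ((N z).powersetCard 2) := by
      intro y _ z _ hyz
      rw [Finset.disjoint_left]
      intro s hsy hsz
      rw [Finset.mem_powersetCard] at hsy hsz
      obtain ⟨a, b, hab, rfl⟩ := Finset.card_eq_two.mp hsy.2
      have ha_y : G.Adj (.inl a) (.inr y) := by
        have := hsy.1 (by simp : a ∈ ({a, b} : Finset _)); simpa [hN] using this
      have hb_y : G.Adj (.inl b) (.inr y) := by
        have := hsy.1 (by simp : b ∈ ({a, b} : Finset _)); simpa [hN] using this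
      have ha_z : G.Adj (.inl a) (.inr z) := by
        have := hsz.1 (by simp : a ∈ ({a, b} : Finset _)); simpa [hN] using this
      have hb_z : G.Adj (.inl b) (.inr z) := by
        have := hsz.1 (by simp : b ∈ ({a, b} : Finset _)); simpa [hN] using this
      refine absurd rfl (h4 (Sum.inl a)
        (.cons ha_y (.cons hb_y.symm (.cons hb_z (.cons ha_z.symm .nil)))) ?_)
      rw [Walk.isCycle_def]
      refine ⟨?_, by simp, ?_⟩
      · simp [Walk.isTrail_def, Sym2.eq, Sym2.rel_iff', hab, hyz, hab.symm, hyz.symm]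
      · simp [hab, hyz, hab.symm, hyz.symm]
    calc ∑ y : Fin w, (N y).card.choose 2
        = ∑ y : Fin w, ((N y).powersetCard 2).card := by simp [Finset.card_powersetCard]
      _ = ((univ : Finset (Fin w)).biUnion fun y => (N y).powersetCard 2).card :=
          (Finset.card_biUnion hdisj).symm
      _ ≤ ((univ : Finset (Fin v)).powersetCard 2).card := by
          apply Finset.card_le_card
          intro s hs
          simp only [Finset.mem_biUnion] at hs
          obtain ⟨y, _, hs⟩ := hs
          rw [Finset.mem_powersetCard] at hs ⊢
          exact ⟨Finset.subset_univ _, hs.2⟩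
      _ = v.choose 2 := by simp [Finset.card_powersetCard]
  rcases Nat.eq_zero_or_pos v with hv | hv
  · -- v = 0 : no edges
    subst hv
    have he0 : e = 0 := by
      rw [hsum]
      refine Finset.sum_eq_zero fun y _ => ?_
      have : (N y) ⊆ (univ : Finset (Fin 0)) := Finset.subset_univ _
      simpa using Finset.card_le_card this
    subst he0
    constructor
    · intro _; simpa using Real.sqrt_nonneg _
    · intro _
      have : (0:ℝ) ≤ (w:ℝ) := Nat.cast_nonneg w
      push_cast
      linarith
  · -- v ≥ 1
    -- e ≤ v.choose 2 + w in ℕ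
    have heN : e ≤ v.choose 2 + w := by
      calc e = ∑ y : Fin w, (N y).card := hsum
        _ ≤ ∑ y : Fin w, ((N y).card.choose 2 + 1) :=
            Finset.sum_le_sum fun y _ => aux_le_choose_stmt8 _
        _ = (∑ y : Fin w, (N y).card.choose 2) + w := by
            rw [Finset.sum_add_distrib]; simp
        _ ≤ v.choose 2 + w := by omega
    -- sum of squares bound in ℕ
    have hsq : ∑ y : Fin w, (N y).card ^ 2 ≤ v * (v - 1) + e := by
      calc ∑ y : Fin w, (N y).card ^ 2
          ≤ ∑ y : Fin w, (2 * (N y).card.choose 2 + (N y).card) :=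
            Finset.sum_le_sum fun y _ => aux_sq_le_stmt8 _
        _ = 2 * (∑ y : Fin w, (N y).card.choose 2) + ∑ y : Fin w, (N y).card := by
            rw [Finset.sum_add_distrib, Finset.mul_sum]
        _ ≤ 2 * v.choose 2 + e := by
            have := hsum
            omega
        _ = v * (v - 1) + e := by rw [aux_two_choose_stmt8]
    have hv1 : (1:ℝ) ≤ (v:ℝ) := by exact_mod_cast hv
    -- Cauchy–Schwarz over ℝ
    have hE2 : (e:ℝ)^2 ≤ (w:ℝ) * ((v:ℝ) * ((v:ℝ)-1) + e) := by
      have hcs := sq_sum_le_card_mul_sum_sq (s := (univ : Finset (Fin w)))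
        (f := fun y => ((N y).card : ℝ))
      simp only [Finset.card_univ, Fintype.card_fin] at hcs
      have h1 : ∑ y : Fin w, ((N y).card : ℝ) = (e:ℝ) := by
        rw [hsum]; push_cast; ring
      have h2 : ∑ y : Fin w, ((N y).card : ℝ)^2 ≤ (v:ℝ) * ((v:ℝ)-1) + e := by
        have := hsq
        have hc : ((∑ y : Fin w, (N y).card ^ 2 : ℕ) : ℝ) ≤ ((v * (v-1) + e : ℕ) : ℝ) := by
          exact_mod_cast this
        push_cast [Nat.cast_sub hv] at hc
        convert hc using 2 <;> push_cast <;> ring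
      rw [h1] at hcs
      calc (e:ℝ)^2 ≤ (w:ℝ) * ∑ y : Fin w, ((N y).card : ℝ)^2 := hcs
        _ ≤ (w:ℝ) * ((v:ℝ) * ((v:ℝ)-1) + e) := by
            apply mul_le_mul_of_nonneg_left h2 (Nat.cast_nonneg w)
    -- cast of e ≤ v.choose 2 + w
    have hch : 2 * ((v.choose 2 : ℕ) : ℝ) = (v:ℝ) * ((v:ℝ) - 1) := by
      have h := aux_two_choose_stmt8 v
      have h' : ((2 * v.choose 2 : ℕ) : ℝ) = ((v * (v-1) : ℕ) : ℝ) := by exact_mod_cast h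
      push_cast [Nat.cast_sub hv] at h'
      linarith
    have hEA : (e:ℝ) ≤ (v:ℝ) * ((v:ℝ)-1) / 2 + w := by
      have : (e:ℝ) ≤ ((v.choose 2 : ℕ) : ℝ) + w := by exact_mod_cast heN
      linarith
    constructor
    · intro hw
      have harg : (0:ℝ) ≤ 2 * v * w * ((v:ℝ) - 1) := by
        have hv' : (0:ℝ) ≤ (v:ℝ) - 1 := by linarith
        positivity
      set s : ℝ := Real.sqrt (2 * v * w * ((v:ℝ) - 1)) with hs
      have hs0 : 0 ≤ s := Real.sqrt_nonneg _
      have hs2 : s ^ 2 = 2 * w * ((v:ℝ) * ((v:ℝ)-1)) := by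
        rw [hs, Real.sq_sqrt harg]; ring
      have hw0 : (0:ℝ) ≤ w := Nat.cast_nonneg w
      have hE0 : (0:ℝ) ≤ e := Nat.cast_nonneg e
      by_contra h
      push_neg at h
      have hEpos : 0 < (e:ℝ) := lt_of_le_of_lt hs0 h
      have h2w : 2 * (w:ℝ) ≤ s := by
        by_contra h2
        push_neg at h2
        nlinarith
      nlinarith [mul_le_mul_of_nonneg_right h2w hE0,
        mul_pos (sub_pos.2 h) (by linarith : (0:ℝ) < 2*(e:ℝ) + s)]
    · intro _
      exact hEA
end

section
/- Let (a_{ij}) (1 ≤ i ≤ v, 1 ≤ j ≤ w) be a matrix of nonnegative reals, with row sums a_{i*}, column sums a_{*j}, and total sum e. Let ρ, γ ≥ 0 be such that a_{i*} ≥ 2ρ for all i and a_{*j} ≥ 2γ for all j. Then Σ_{i,j} a_{ij}(a_{i*} - ρ)(a_{*j} - γ) ≥ e(e/v - ρ)(e/w - γ). -/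
/-!
Write `r i`, `c j` for the row and column sums, `R`, `C` for their means and `P = ∑ a i j`.
Expanding around the means, the left-hand side minus `P (R - ρ) (C - γ)` is
`∑ a i j (r i - R)(c j - C) + (C - γ) ∑ (r i - R)² + (R - ρ) ∑ (c j - C)²`, because
`∑ i r i (r i - R) = ∑ i (r i - R)²`. Spreading row `i`'s square over its entries with weights
`a i j / r i` (and likewise for columns) turns this into a sum over the entries of
`a i j` times a quadratic form in `(r i - R, c j - C)`, and the bounds `r i, R ≥ 2ρ`,
`c j, C ≥ 2γ` make that form nonnegative.
-/

open Finset
open scoped BigOperators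

section Pointwise

variable {r R ρ c C γ : ℝ}

/-- Twice the form is
`(c (r - R) + R (c - C))² + (c - 2γ) c (r - R)² + ((R - 2ρ) r + R (r - R)) (c - C)²`. -/
lemma cross_form_nonneg_of_le (hρR : 2 * ρ ≤ R) (hγc : 2 * γ ≤ c) (hRr : R ≤ r)
    (hR : 0 ≤ R) (hc : 0 ≤ c) :
    0 ≤ (C - γ) * (r - R) ^ 2 * c + (r - R) * (c - C) * (r * c)
      + (R - ρ) * (c - C) ^ 2 * r := by
  have h₁ := sq_nonneg (c * (r - R) + R * (c - C))
  have h₂ := mul_nonneg (mul_nonneg (sub_nonneg.2 hγc) hc) (sq_nonneg (r - R))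
  have h₃ := mul_nonneg (add_nonneg (mul_nonneg (sub_nonneg.2 hρR) (hR.trans hRr))
    (mul_nonneg hR (sub_nonneg.2 hRr))) (sq_nonneg (c - C))
  linear_combination (h₁ + h₂ + h₃) / 2

lemma cross_form_div_nonneg (hρr : 2 * ρ ≤ r) (hρR : 2 * ρ ≤ R) (hγc : 2 * γ ≤ c)
    (hγC : 2 * γ ≤ C) (hR : 0 ≤ R) (hC : 0 ≤ C) (hr : 0 < r) (hc : 0 < c) :
    0 ≤ (r - R) * (c - C) + (C - γ) * ((r - R) ^ 2 / r) + (R - ρ) * ((c - C) ^ 2 / c) := by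
  have hP : 0 ≤ (C - γ) * (r - R) ^ 2 * c + (r - R) * (c - C) * (r * c)
      + (R - ρ) * (c - C) ^ 2 * r := by
    rcases le_total R r with hRr | hrR
    · exact cross_form_nonneg_of_le hρR hγc hRr hR hc.le
    rcases le_total C c with hCc | hcC
    · linear_combination
        cross_form_nonneg_of_le (R := C) (ρ := γ) (C := R) (γ := ρ) hγC hρr hCc hC hr.le
    · have hCγ : 0 ≤ C - γ := by linarith
      have hRρ : 0 ≤ R - ρ := by linarith
      have hxy : 0 ≤ (r - R) * (c - C) :=
        mul_nonneg_of_nonpos_of_nonpos (by linarith) (by linarith)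
      exact add_nonneg (add_nonneg (by positivity) (mul_nonneg hxy (by positivity)))
        (by positivity)
  have hform : (r - R) * (c - C) + (C - γ) * ((r - R) ^ 2 / r) + (R - ρ) * ((c - C) ^ 2 / c)
      = ((C - γ) * (r - R) ^ 2 * c + (r - R) * (c - C) * (r * c)
        + (R - ρ) * (c - C) ^ 2 * r) / (r * c) := by
    field_simp
    ring
  rw [hform]
  positivity

end Pointwise

section Weighted

variable {ι κ : Type*} [Fintype ι] [Fintype κ]

lemma sum_mul_sq_div_le_sum_mul (a : ι → κ → ℝ) (r : ι → ℝ) (hr : ∀ i, ∑ j, a i j = r i) :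
    ∑ i, ∑ j, a i j * ((r i - 𝔼 k, r k) ^ 2 / r i) ≤ ∑ i, ∑ j, a i j * (r i - 𝔼 k, r k) := by
  simp only [← sum_mul, hr]
  have hbalance : ∑ i, (r i - 𝔼 k, r k) = 0 := Fintype.sum_balance r
  calc ∑ i, r i * ((r i - 𝔼 k, r k) ^ 2 / r i)
      ≤ ∑ i, (r i - 𝔼 k, r k) ^ 2 := by
        refine sum_le_sum fun i _ => ?_
        rcases eq_or_ne (r i) 0 with h | h
        · rw [h, zero_mul]
          positivity
        · rw [mul_div_cancel₀ _ h]
    _ = ∑ i, r i * (r i - 𝔼 k, r k) := by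
        have hsplit : ∑ i, r i * (r i - 𝔼 k, r k)
            = ∑ i, (r i - 𝔼 k, r k) ^ 2 + (𝔼 k, r k) * ∑ i, (r i - 𝔼 k, r k) := by
          rw [mul_sum, ← sum_add_distrib]
          exact sum_congr rfl fun i _ => by ring
        rw [hsplit, hbalance, mul_zero, add_zero]

theorem sum_mul_expect_sub_mul_expect_sub_le (a : ι → κ → ℝ) (ha : ∀ i j, 0 ≤ a i j) (ρ γ : ℝ)
    (r : ι → ℝ) (c : κ → ℝ) (hr : ∀ i, ∑ j, a i j = r i) (hc : ∀ j, ∑ i, a i j = c j)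
    (hrow : ∀ i, 2 * ρ ≤ r i) (hcol : ∀ j, 2 * γ ≤ c j) [Nonempty ι] [Nonempty κ] :
    (∑ i, ∑ j, a i j) * ((𝔼 i, r i) - ρ) * ((𝔼 j, c j) - γ) ≤
      ∑ i, ∑ j, a i j * (r i - ρ) * (c j - γ) := by
  set R := 𝔼 i, r i
  set C := 𝔼 j, c j
  have hρR : 2 * ρ ≤ R := le_expect univ_nonempty fun i _ => hrow i
  have hγC : 2 * γ ≤ C := le_expect univ_nonempty fun j _ => hcol j
  have hR : 0 ≤ R := expect_nonneg fun i _ => hr i ▸ sum_nonneg fun j _ => ha i j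
  have hC : 0 ≤ C := expect_nonneg fun j _ => hc j ▸ sum_nonneg fun i _ => ha i j
  have hrows := sum_mul_sq_div_le_sum_mul a r hr
  have hcols : ∑ i, ∑ j, a i j * ((c j - C) ^ 2 / c j) ≤ ∑ i, ∑ j, a i j * (c j - C) := by
    rw [sum_comm, sum_comm (f := fun i j => a i j * (c j - C))]
    exact sum_mul_sq_div_le_sum_mul (fun j i => a i j) c hc
  have hentries : 0 ≤ ∑ i, ∑ j, a i j * (r i - R) * (c j - C)
      + (C - γ) * ∑ i, ∑ j, a i j * ((r i - R) ^ 2 / r i)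
      + (R - ρ) * ∑ i, ∑ j, a i j * ((c j - C) ^ 2 / c j) := by
    simp only [mul_sum, ← sum_add_distrib]
    refine sum_nonneg fun i _ => sum_nonneg fun j _ => ?_
    rcases (ha i j).eq_or_lt with h | h
    · simp [← h]
    have hri : 0 < r i := h.trans_le (hr i ▸ single_le_sum (fun j _ => ha i j) (mem_univ j))
    have hcj : 0 < c j := h.trans_le (hc j ▸ single_le_sum (fun i _ => ha i j) (mem_univ i))
    linear_combination
      mul_nonneg h.le (cross_form_div_nonneg (hrow i) hρR (hcol j) hγC hR hC hri hcj)
  have hexpand : ∑ i, ∑ j, a i j * (r i - ρ) * (c j - γ) =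
      ∑ i, ∑ j, a i j * (r i - R) * (c j - C) + (C - γ) * ∑ i, ∑ j, a i j * (r i - R)
        + (R - ρ) * ∑ i, ∑ j, a i j * (c j - C) + (∑ i, ∑ j, a i j) * (R - ρ) * (C - γ) := by
    simp only [mul_sum, sum_mul, ← sum_add_distrib]
    exact sum_congr rfl fun i _ => sum_congr rfl fun j _ => by ring
  rw [hexpand]
  linarith [mul_le_mul_of_nonneg_left hrows (by linarith : 0 ≤ C - γ),
    mul_le_mul_of_nonneg_left hcols (by linarith : 0 ≤ R - ρ)]

end Weighted

theorem stmt_9_general (v w : ℕ) (hv : 1 ≤ v) (hw : 1 ≤ w)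
    (a : Fin v → Fin w → ℝ) (ha : ∀ i j, 0 ≤ a i j)
    (ρ γ : ℝ)
    (hrow : ∀ i, 2 * ρ ≤ ∑ j, a i j)
    (hcol : ∀ j, 2 * γ ≤ ∑ i, a i j)
    (e : ℝ) (he : e = ∑ i, ∑ j, a i j) :
    ∑ i, ∑ j, a i j * ((∑ j', a i j') - ρ) * ((∑ i', a i' j) - γ) ≥
      e * (e / v - ρ) * (e / w - γ) := by
  have : Nonempty (Fin v) := ⟨⟨0, hv⟩⟩
  have : Nonempty (Fin w) := ⟨⟨0, hw⟩⟩
  have hR : e / v = 𝔼 i, ∑ j, a i j := by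
    rw [Fintype.expect_eq_sum_div_card, Fintype.card_fin, he]
  have hC : e / w = 𝔼 j, ∑ i, a i j := by
    rw [Fintype.expect_eq_sum_div_card, Fintype.card_fin, he, sum_comm]
  rw [ge_iff_le, hR, hC, he]
  exact sum_mul_expect_sub_mul_expect_sub_le a ha ρ γ _ _ (fun _ => rfl) (fun _ => rfl) hrow hcol

theorem stmt_9 (v w : ℕ) (hv : 1 ≤ v) (hw : 1 ≤ w)
    (a : Fin v → Fin w → ℝ) (ha : ∀ i j, 0 ≤ a i j)
    (ρ γ : ℝ) (hρ : 0 ≤ ρ) (hγ : 0 ≤ γ)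
    (hrow : ∀ i, 2 * ρ ≤ ∑ j, a i j)
    (hcol : ∀ j, 2 * γ ≤ ∑ i, a i j)
    (e : ℝ) (he : e = ∑ i, ∑ j, a i j) :
    ∑ i, ∑ j, a i j * ((∑ j', a i j') - ρ) * ((∑ i', a i' j) - γ) ≥
      e * (e / v - ρ) * (e / w - γ) :=
  stmt_9_general v w hv hw a ha ρ γ hrow hcol e he
end

section
/- In the setting of the generalized Atkinson inequality, equality Σ_{i,j} a_{ij}(a_{i*} - ρ)(a_{*j} - γ) = e(e/v - ρ)(e/w - γ) holds if and only if all row sums a_{i*} are equal and all column sums a_{*j} are equal. -/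
open Real Set

/-- The function `x ↦ x * log (x - ρ)` is strictly convex on `[2ρ, ∞)` for `ρ ≥ 0`. -/
lemma strictConvexOn_mul_log_sub (ρ : ℝ) (hρ : 0 ≤ ρ) :
    StrictConvexOn ℝ (Set.Ici (2*ρ)) (fun x : ℝ => x * Real.log (x - ρ)) := by
  rcases eq_or_lt_of_le hρ with h0 | h0
  · subst h0
    simpa using Real.strictConvexOn_mul_log
  · apply strictConvexOn_of_deriv2_pos (convex_Ici _)
    · apply ContinuousOn.mul continuousOn_id
      apply ContinuousOn.log ((continuousOn_id).sub continuousOn_const)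
      intro x hx
      have hx' : (2:ℝ)*ρ ≤ x := hx
      have : 0 < x - ρ := by linarith
      exact ne_of_gt this
    · intro x hx
      rw [interior_Ici] at hx
      have hx2 : 2*ρ < x := hx
      have hxρ : ρ < x := by linarith
      have hpos : 0 < x - ρ := by linarith
      have hev : (deriv fun y : ℝ => y * Real.log (y - ρ)) =ᶠ[nhds x]
          (fun y => Real.log (y - ρ) + y * (y - ρ)⁻¹) := by
        filter_upwards [eventually_gt_nhds hxρ] with y hy
        have hne : y - ρ ≠ 0 := ne_of_gt (by linarith)
        have h1 : HasDerivAt (fun z : ℝ => z * Real.log (z - ρ))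
            (1 * Real.log (y - ρ) + y * (1 / (y - ρ))) y :=
          (hasDerivAt_id y).mul (((hasDerivAt_id y).sub_const ρ).log hne)
        rw [h1.deriv]
        field_simp
      have h2 : deriv^[2] (fun y : ℝ => y * Real.log (y - ρ)) x
          = deriv (fun y => Real.log (y - ρ) + y * (y - ρ)⁻¹) x := by
        show deriv (deriv fun y : ℝ => y * Real.log (y - ρ)) x = _
        exact hev.deriv_eq
      rw [h2]
      have hne : x - ρ ≠ 0 := ne_of_gt hpos
      have h3 : HasDerivAt (fun y : ℝ => Real.log (y - ρ) + y * (y - ρ)⁻¹)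
          (1 / (x - ρ) + (1 * (x - ρ)⁻¹ + x * (-1 / (x - ρ) ^ 2))) x := by
        have ha : HasDerivAt (fun y : ℝ => Real.log (y - ρ)) (1 / (x - ρ)) x :=
          ((hasDerivAt_id x).sub_const ρ).log hne
        have hb : HasDerivAt (fun y : ℝ => (y - ρ)⁻¹) (-1 / (x - ρ) ^ 2) x :=
          ((hasDerivAt_id x).sub_const ρ).inv hne
        exact ha.add ((hasDerivAt_id x).mul hb)
      rw [h3.deriv]
      have hval : 1 / (x - ρ) + (1 * (x - ρ)⁻¹ + x * (-1 / (x - ρ) ^ 2))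
          = (x - 2*ρ) / (x - ρ) ^ 2 := by
        field_simp
        ring
      rw [hval]
      exact div_pos (by linarith) (by positivity)

/-- Strict Jensen for the row sums. -/
lemma row_jensen_strict {v : ℕ} (r : Fin v → ℝ) (ρ : ℝ) (hρ : 0 ≤ ρ)
    (hr : ∀ i, 2*ρ ≤ r i) (i₀ i₁ : Fin v) (hne : r i₀ ≠ r i₁) :
    (∑ i, r i) * Real.log ((∑ i, r i)/(v:ℝ) - ρ) < ∑ i, r i * Real.log (r i - ρ) := by
  have hv0 : 0 < (v:ℝ) := by exact_mod_cast i₀.pos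
  have hj := (strictConvexOn_mul_log_sub ρ hρ).map_sum_lt (t := Finset.univ)
    (w := fun _ => 1/(v:ℝ)) (p := r)
    (fun i _ => by positivity)
    (by simp [Finset.card_univ]; field_simp)
    (fun i _ => by exact hr i)
    ⟨i₀, Finset.mem_univ _, i₁, Finset.mem_univ _, hne⟩
  have h1 : (∑ i, (1/(v:ℝ)) • r i) = (∑ i, r i)/(v:ℝ) := by
    simp only [smul_eq_mul, ← Finset.mul_sum]
    ring
  rw [h1] at hj
  have := mul_lt_mul_of_pos_left hj hv0
  calc (∑ i, r i) * Real.log ((∑ i, r i)/(v:ℝ) - ρ)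
      = (v:ℝ) * (((∑ i, r i)/(v:ℝ)) * Real.log ((∑ i, r i)/(v:ℝ) - ρ)) := by
        field_simp
    _ < (v:ℝ) * ∑ i, (1/(v:ℝ)) • (r i * Real.log (r i - ρ)) := this
    _ = ∑ i, r i * Real.log (r i - ρ) := by
        simp only [smul_eq_mul, ← Finset.mul_sum]
        field_simp

/-- Non-strict Jensen for the column sums. -/
lemma col_jensen {w : ℕ} (hw : 0 < w) (c : Fin w → ℝ) (γ : ℝ) (hγ : 0 ≤ γ)
    (hc : ∀ j, 2*γ ≤ c j) :
    (∑ j, c j) * Real.log ((∑ j, c j)/(w:ℝ) - γ) ≤ ∑ j, c j * Real.log (c j - γ) := by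
  have hw0 : 0 < (w:ℝ) := by exact_mod_cast hw
  have hj := (strictConvexOn_mul_log_sub γ hγ).convexOn.map_sum_le (t := Finset.univ)
    (w := fun _ => 1/(w:ℝ)) (p := c)
    (fun j _ => by positivity)
    (by simp [Finset.card_univ]; field_simp)
    (fun j _ => by exact hc j)
  have h1 : (∑ j, (1/(w:ℝ)) • c j) = (∑ j, c j)/(w:ℝ) := by
    simp only [smul_eq_mul, ← Finset.mul_sum]
    ring
  rw [h1] at hj
  have := mul_le_mul_of_nonneg_left hj (le_of_lt hw0)
  calc (∑ j, c j) * Real.log ((∑ j, c j)/(w:ℝ) - γ)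
      = (w:ℝ) * (((∑ j, c j)/(w:ℝ)) * Real.log ((∑ j, c j)/(w:ℝ) - γ)) := by
        field_simp
    _ ≤ (w:ℝ) * ∑ j, (1/(w:ℝ)) • (c j * Real.log (c j - γ)) := this
    _ = ∑ j, c j * Real.log (c j - γ) := by
        simp only [smul_eq_mul, ← Finset.mul_sum]
        field_simp

/-- Key strict inequality: if two row sums differ, the sum exceeds `e (e/v - ρ)(e/w - γ)`. -/
lemma aux_strict (v w : ℕ) (a : Fin v → Fin w → ℝ) (ha : ∀ i j, 0 ≤ a i j)
    (ρ γ : ℝ) (hρ : 0 ≤ ρ) (hγ : 0 ≤ γ)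
    (hrow : ∀ i, 2 * ρ ≤ ∑ j, a i j)
    (hcol : ∀ j, 2 * γ ≤ ∑ i, a i j)
    (he : 0 < ∑ i, ∑ j, a i j)
    (i₀ i₁ : Fin v) (hne : (∑ j, a i₀ j) ≠ ∑ j, a i₁ j) :
    (∑ i, ∑ j, a i j) * ((∑ i, ∑ j, a i j)/(v:ℝ) - ρ) * ((∑ i, ∑ j, a i j)/(w:ℝ) - γ)
      < ∑ i, ∑ j, a i j * ((∑ j', a i j') - ρ) * ((∑ i', a i' j) - γ) := by
  classical
  set r : Fin v → ℝ := fun i => ∑ j, a i j with hr_def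
  set c : Fin w → ℝ := fun j => ∑ i, a i j with hc_def
  set e : ℝ := ∑ i, ∑ j, a i j with he_def
  have hsum_r : ∑ i, r i = e := rfl
  have hsum_c : ∑ j, c j = e := by
    rw [he_def]; exact (Finset.sum_comm ..)
  -- basic positivity facts
  have hw : 0 < w := by
    by_contra hw
    have : w = 0 := Nat.eq_zero_of_not_pos hw
    subst this
    simp [he_def] at he
  have hv0 : (0:ℝ) < v := by exact_mod_cast i₀.pos
  have hw0 : (0:ℝ) < w := by exact_mod_cast hw
  have hr_nonneg : ∀ i, 0 ≤ r i := fun i => Finset.sum_nonneg fun j _ => ha i j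
  have hc_nonneg : ∀ j, 0 ≤ c j := fun j => Finset.sum_nonneg fun i _ => ha i j
  have hrρ : ∀ i, 0 ≤ r i - ρ := fun i => by have := hrow i; have := hr_nonneg i; simp only [hr_def]; linarith [hrow i]
  have hcγ : ∀ j, 0 ≤ c j - γ := fun j => by simp only [hc_def]; linarith [hcol j]
  have hrρ' : ∀ i j, a i j ≠ 0 → 0 < r i - ρ := by
    intro i j hij
    have h1 : a i j ≤ r i := Finset.single_le_sum (fun j' _ => ha i j') (Finset.mem_univ j)
    have h2 : 0 < a i j := lt_of_le_of_ne (ha i j) (Ne.symm hij)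
    have := hrow i
    simp only [hr_def] at h1 ⊢
    linarith
  have hcγ' : ∀ i j, a i j ≠ 0 → 0 < c j - γ := by
    intro i j hij
    have h1 : a i j ≤ c j := Finset.single_le_sum (fun i' _ => ha i' j) (Finset.mem_univ i)
    have h2 : 0 < a i j := lt_of_le_of_ne (ha i j) (Ne.symm hij)
    have := hcol j
    simp only [hc_def] at h1 ⊢
    linarith
  have hα : 0 < e/(v:ℝ) - ρ := by
    have h1 : 2*ρ*(v:ℝ) ≤ e := by
      rw [he_def]
      calc 2*ρ*(v:ℝ) = ∑ _i : Fin v, 2*ρ := by simp [Finset.card_univ]; ring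
        _ ≤ ∑ i, ∑ j, a i j := Finset.sum_le_sum fun i _ => hrow i
    rw [sub_pos]
    rw [lt_div_iff₀ hv0]
    nlinarith
  have hβ : 0 < e/(w:ℝ) - γ := by
    have h1 : 2*γ*(w:ℝ) ≤ e := by
      have : ∑ j, c j = e := hsum_c
      calc 2*γ*(w:ℝ) = ∑ _j : Fin w, 2*γ := by simp [Finset.card_univ]; ring
        _ ≤ ∑ j, c j := Finset.sum_le_sum fun j _ => hcol j
        _ = e := hsum_c
    rw [sub_pos, lt_div_iff₀ hw0]
    nlinarith
  -- the support
  set t : Finset (Fin v × Fin w) := Finset.univ.filter (fun p => a p.1 p.2 ≠ 0) with ht_def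
  have hsum_t : ∑ p ∈ t, a p.1 p.2 = e := by
    rw [ht_def, Finset.sum_filter_ne_zero, he_def]
    exact Fintype.sum_prod_type (f := fun p : Fin v × Fin w => a p.1 p.2)
  -- S > 0
  set S : ℝ := ∑ i, ∑ j, a i j * (r i - ρ) * (c j - γ) with hS_def
  have hS_prod : S = ∑ p : Fin v × Fin w, a p.1 p.2 * ((r p.1 - ρ) * (c p.2 - γ)) := by
    rw [hS_def, Fintype.sum_prod_type]
    congr 1; ext i; congr 1; ext j; ring
  have ht_ne : t.Nonempty := by
    by_contra hemp
    rw [Finset.not_nonempty_iff_eq_empty] at hemp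
    rw [hemp] at hsum_t
    simp at hsum_t
    linarith [hsum_t]
  have hS_pos : 0 < S := by
    obtain ⟨p₀, hp₀⟩ := ht_ne
    rw [ht_def, Finset.mem_filter] at hp₀
    rw [hS_prod]
    apply Finset.sum_pos'
    · intro p _
      exact mul_nonneg (ha p.1 p.2) (mul_nonneg (hrρ p.1) (hcγ p.2))
    · refine ⟨p₀, Finset.mem_univ _, ?_⟩
      have h2 : 0 < a p₀.1 p₀.2 := lt_of_le_of_ne (ha p₀.1 p₀.2) (Ne.symm hp₀.2)
      exact mul_pos h2 (mul_pos (hrρ' p₀.1 p₀.2 hp₀.2) (hcγ' p₀.1 p₀.2 hp₀.2))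
  -- Jensen for log (AM-GM)
  have hjensen : ∑ p ∈ t, (a p.1 p.2 / e) • Real.log ((r p.1 - ρ) * (c p.2 - γ))
      ≤ Real.log (∑ p ∈ t, (a p.1 p.2 / e) • ((r p.1 - ρ) * (c p.2 - γ))) := by
    apply (strictConcaveOn_log_Ioi.concaveOn).le_map_sum
    · intro p _; exact div_nonneg (ha p.1 p.2) he.le
    · rw [← Finset.sum_div, hsum_t, div_self (ne_of_gt he)]
    · intro p hp
      rw [ht_def, Finset.mem_filter] at hp
      exact mul_pos (hrρ' p.1 p.2 hp.2) (hcγ' p.1 p.2 hp.2)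
  -- identify RHS of jensen
  have hrhs : ∑ p ∈ t, (a p.1 p.2 / e) • ((r p.1 - ρ) * (c p.2 - γ)) = S / e := by
    have h1 : ∑ p ∈ t, a p.1 p.2 * ((r p.1 - ρ) * (c p.2 - γ))
        = ∑ p : Fin v × Fin w, a p.1 p.2 * ((r p.1 - ρ) * (c p.2 - γ)) := by
      rw [ht_def]
      apply Finset.sum_filter_of_ne
      intro p _ hne0 h0
      rw [h0] at hne0; simp at hne0
    simp only [smul_eq_mul]
    rw [Finset.sum_congr rfl (fun p _ => by ring :
      ∀ p ∈ t, a p.1 p.2 / e * ((r p.1 - ρ) * (c p.2 - γ))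
        = a p.1 p.2 * ((r p.1 - ρ) * (c p.2 - γ)) / e)]
    rw [← Finset.sum_div, h1, ← hS_prod]
  -- identify LHS of jensen
  have hlhs : ∑ p ∈ t, (a p.1 p.2 / e) • Real.log ((r p.1 - ρ) * (c p.2 - γ))
      = ((∑ i, r i * Real.log (r i - ρ)) + (∑ j, c j * Real.log (c j - γ))) / e := by
    simp only [smul_eq_mul]
    have hsplit : ∀ p ∈ t, a p.1 p.2 / e * Real.log ((r p.1 - ρ) * (c p.2 - γ))
        = (a p.1 p.2 * Real.log (r p.1 - ρ) + a p.1 p.2 * Real.log (c p.2 - γ)) / e := by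
      intro p hp
      rw [ht_def, Finset.mem_filter] at hp
      rw [Real.log_mul (ne_of_gt (hrρ' p.1 p.2 hp.2)) (ne_of_gt (hcγ' p.1 p.2 hp.2))]
      ring
    rw [Finset.sum_congr rfl hsplit, ← Finset.sum_div]
    congr 1
    rw [Finset.sum_add_distrib]
    congr 1
    · have h1 : ∑ p ∈ t, a p.1 p.2 * Real.log (r p.1 - ρ)
          = ∑ p : Fin v × Fin w, a p.1 p.2 * Real.log (r p.1 - ρ) := by
        rw [ht_def]
        apply Finset.sum_filter_of_ne
        intro p _ hne0 h0
        rw [h0] at hne0; simp at hne0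
      rw [h1, Fintype.sum_prod_type]
      apply Finset.sum_congr rfl
      intro i _
      simp only [hr_def]
      rw [← Finset.sum_mul]
    · have h1 : ∑ p ∈ t, a p.1 p.2 * Real.log (c p.2 - γ)
          = ∑ p : Fin v × Fin w, a p.1 p.2 * Real.log (c p.2 - γ) := by
        rw [ht_def]
        apply Finset.sum_filter_of_ne
        intro p _ hne0 h0
        rw [h0] at hne0; simp at hne0
      rw [h1, Fintype.sum_prod_type_right]
      apply Finset.sum_congr rfl
      intro j _
      simp only [hc_def]
      rw [← Finset.sum_mul]
  -- strict row bound
  have hrow_strict : e * Real.log (e/(v:ℝ) - ρ) < ∑ i, r i * Real.log (r i - ρ) := by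
    have := row_jensen_strict r ρ hρ (fun i => hrow i) i₀ i₁ hne
    rwa [hsum_r] at this
  -- column bound
  have hcol_le : e * Real.log (e/(w:ℝ) - γ) ≤ ∑ j, c j * Real.log (c j - γ) := by
    have := col_jensen hw c γ hγ (fun j => hcol j)
    rwa [hsum_c] at this
  -- combine
  have hkey : Real.log (e/(v:ℝ) - ρ) + Real.log (e/(w:ℝ) - γ) < Real.log (S / e) := by
    have h1 : e * Real.log (e/(v:ℝ) - ρ) + e * Real.log (e/(w:ℝ) - γ)
        < (∑ i, r i * Real.log (r i - ρ)) + (∑ j, c j * Real.log (c j - γ)) :=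
      add_lt_add_of_lt_of_le hrow_strict hcol_le
    have h2 := hjensen
    rw [hrhs, hlhs] at h2
    rw [div_le_iff₀ he] at h2
    have : e * (Real.log (e/(v:ℝ) - ρ) + Real.log (e/(w:ℝ) - γ)) < e * Real.log (S/e) := by
      nlinarith
    exact lt_of_mul_lt_mul_left this (le_of_lt he)
  have hfin : (e/(v:ℝ) - ρ) * (e/(w:ℝ) - γ) < S / e := by
    have h1 := Real.exp_lt_exp.2 hkey
    rwa [Real.exp_add, Real.exp_log hα, Real.exp_log hβ,
      Real.exp_log (div_pos hS_pos he)] at h1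
  calc e * (e/(v:ℝ) - ρ) * (e/(w:ℝ) - γ)
      = e * ((e/(v:ℝ) - ρ) * (e/(w:ℝ) - γ)) := by ring
    _ < e * (S / e) := by exact mul_lt_mul_of_pos_left hfin he
    _ = S := by field_simp

theorem stmt_10 (v w : ℕ) (hv : 1 ≤ v) (hw : 1 ≤ w)
    (a : Fin v → Fin w → ℝ) (ha : ∀ i j, 0 ≤ a i j)
    (ρ γ : ℝ) (hρ : 0 ≤ ρ) (hγ : 0 ≤ γ)
    (hrow : ∀ i, 2 * ρ ≤ ∑ j, a i j)
    (hcol : ∀ j, 2 * γ ≤ ∑ i, a i j)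
    (e : ℝ) (he : e = ∑ i, ∑ j, a i j) :
    (∑ i, ∑ j, a i j * ((∑ j', a i j') - ρ) * ((∑ i', a i' j) - γ) =
      e * (e / v - ρ) * (e / w - γ)) ↔
    ((∀ i i', ∑ j, a i j = ∑ j, a i' j) ∧ (∀ j j', ∑ i, a i j = ∑ i, a i j')) := by
  classical
  subst he
  constructor
  · intro hEq
    by_cases hzero : ∑ i, ∑ j, a i j = 0
    · -- all entries vanish
      have hall : ∀ i j, a i j = 0 := by
        intro i j
        have h1 : ∀ i ∈ Finset.univ, (0:ℝ) ≤ ∑ j, a i j :=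
          fun i _ => Finset.sum_nonneg fun j _ => ha i j
        have h2 := (Finset.sum_eq_zero_iff_of_nonneg h1).1 hzero i (Finset.mem_univ i)
        have h3 := (Finset.sum_eq_zero_iff_of_nonneg (fun j _ => ha i j)).1 h2 j (Finset.mem_univ j)
        exact h3
      constructor
      · intro i i'; simp [hall]
      · intro j j'; simp [hall]
    · have hpos : 0 < ∑ i, ∑ j, a i j := by
        rcases lt_or_eq_of_le (Finset.sum_nonneg fun i _ =>
          Finset.sum_nonneg fun j _ => ha i j) with h | h
        · exact h
        · exact absurd h.symm hzero
      constructor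
      · -- rows equal
        by_contra hcontra
        push_neg at hcontra
        obtain ⟨i₀, i₁, hne⟩ := hcontra
        have := aux_strict v w a ha ρ γ hρ hγ hrow hcol hpos i₀ i₁ hne
        rw [hEq] at this
        exact lt_irrefl _ this
      · -- columns equal: apply aux_strict to the transpose
        by_contra hcontra
        push_neg at hcontra
        obtain ⟨j₀, j₁, hne⟩ := hcontra
        have hpos' : 0 < ∑ j, ∑ i, a i j := by
          rwa [Finset.sum_comm]
        have hstrict := aux_strict w v (fun j i => a i j) (fun j i => ha i j) γ ρ hγ hρ
          hcol hrow hpos' j₀ j₁ hne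
        -- rewrite both sides
        have hE1 : ∑ j, ∑ i, a i j = ∑ i, ∑ j, a i j := Finset.sum_comm ..
        rw [hE1] at hstrict
        have hE2 : ∑ j, ∑ i, a i j * ((∑ i', a i' j) - γ) * ((∑ j', a i j') - ρ)
            = ∑ i, ∑ j, a i j * ((∑ j', a i j') - ρ) * ((∑ i', a i' j) - γ) := by
          rw [Finset.sum_comm]
          apply Finset.sum_congr rfl
          intro i _
          apply Finset.sum_congr rfl
          intro j _
          ring
        rw [hE2] at hstrict
        rw [hEq] at hstrict
        have : (∑ i, ∑ j, a i j) * ((∑ i, ∑ j, a i j) / (v:ℝ) - ρ) *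
            ((∑ i, ∑ j, a i j) / (w:ℝ) - γ)
            = (∑ i, ∑ j, a i j) * ((∑ i, ∑ j, a i j) / (w:ℝ) - γ) *
            ((∑ i, ∑ j, a i j) / (v:ℝ) - ρ) := by ring
        rw [this] at hstrict
        exact lt_irrefl _ hstrict
  · rintro ⟨hR, hC⟩
    have hv0 : (0:ℝ) < v := by exact_mod_cast hv
    have hw0 : (0:ℝ) < w := by exact_mod_cast hw
    have hri : ∀ i, (∑ j, a i j) = (∑ i, ∑ j, a i j) / (v:ℝ) := by
      intro i
      have h1 : ∑ i', ∑ j, a i' j = ∑ _i' : Fin v, ∑ j, a i j :=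
        Finset.sum_congr rfl fun i' _ => hR i' i
      rw [h1, Finset.sum_const, Finset.card_univ, Fintype.card_fin, nsmul_eq_mul]
      field_simp
    have hcj : ∀ j, (∑ i, a i j) = (∑ i, ∑ j, a i j) / (w:ℝ) := by
      intro j
      have h0 : ∑ i, ∑ j, a i j = ∑ j', ∑ i, a i j' := Finset.sum_comm ..
      have h1 : ∑ j', ∑ i, a i j' = ∑ _j' : Fin w, ∑ i, a i j :=
        Finset.sum_congr rfl fun j' _ => hC j' j
      rw [h0, h1, Finset.sum_const, Finset.card_univ, Fintype.card_fin, nsmul_eq_mul]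
      field_simp
    calc ∑ i, ∑ j, a i j * ((∑ j', a i j') - ρ) * ((∑ i', a i' j) - γ)
        = ∑ i, ∑ j, a i j * (((∑ i, ∑ j, a i j) / (v:ℝ) - ρ) * ((∑ i, ∑ j, a i j) / (w:ℝ) - γ)) := by
          apply Finset.sum_congr rfl
          intro i _
          apply Finset.sum_congr rfl
          intro j _
          rw [hri i, hcj j]
          ring
      _ = (∑ i, ∑ j, a i j) * (((∑ i, ∑ j, a i j) / (v:ℝ) - ρ) * ((∑ i, ∑ j, a i j) / (w:ℝ) - γ)) := by
          simp only [Finset.sum_mul]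
      _ = (∑ i, ∑ j, a i j) * ((∑ i, ∑ j, a i j) / (v:ℝ) - ρ) * ((∑ i, ∑ j, a i j) / (w:ℝ) - γ) := by
          ring
end

section
/- Let (a_{ij}) be a nonnegative real matrix with row sums a_{i*}, column sums a_{*j}, total sum e. Then Σ_{i,j} a_{ij} a_{i*} a_{*j} ≥ e^3/(vw). -/
open Finset Real

private lemma sqrt_aux1 (x y : ℝ) (hx : 0 ≤ x) :
    x * Real.sqrt y = Real.sqrt x * Real.sqrt (x * y) := by
  rw [Real.sqrt_mul hx, ← mul_assoc, Real.mul_self_sqrt hx]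

private lemma sqrt_aux2 (x y : ℝ) (hx : 0 ≤ x) (hy : 0 ≤ y) (hxy : y = 0 → x = 0) :
    x = Real.sqrt (x * Real.sqrt y) * Real.sqrt (x / Real.sqrt y) := by
  by_cases hs : Real.sqrt y = 0
  · have hx0 : x = 0 := hxy ((Real.sqrt_eq_zero hy).mp hs)
    simp [hx0]
  · have hs0 : 0 ≤ Real.sqrt y := Real.sqrt_nonneg y
    rw [← Real.sqrt_mul (mul_nonneg hx hs0)]
    have : x * Real.sqrt y * (x / Real.sqrt y) = x * x := by
      field_simp
    rw [this, Real.sqrt_mul_self hx]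

private lemma sqrt_aux3 (x u t : ℝ) (hx : 0 ≤ x) (hu : 0 ≤ u) (ht : 0 ≤ t)
    (hxu : u = 0 → x = 0) (hxt : t = 0 → x = 0) :
    x / Real.sqrt (u * t) = Real.sqrt (x / u) * Real.sqrt (x / t) := by
  by_cases hu0 : u = 0
  · simp [hxu hu0]
  by_cases ht0 : t = 0
  · simp [hxt ht0]
  · rw [← Real.sqrt_mul (div_nonneg hx hu), div_mul_div_comm,
      Real.sqrt_div (mul_nonneg hx hx), Real.sqrt_mul_self hx]

theorem stmt_11 (v w : ℕ) (hv : 1 ≤ v) (hw : 1 ≤ w)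
    (a : Fin v → Fin w → ℝ) (ha : ∀ i j, 0 ≤ a i j)
    (e : ℝ) (he : e = ∑ i, ∑ j, a i j) :
    ∑ i, ∑ j, a i j * (∑ j', a i j') * (∑ i', a i' j) ≥ e^3 / (v * w) := by
  classical
  set r : Fin v → ℝ := fun i => ∑ j, a i j with hrdef
  set c : Fin w → ℝ := fun j => ∑ i, a i j with hcdef
  have hr0 : ∀ i, 0 ≤ r i := fun i => Finset.sum_nonneg fun j _ => ha i j
  have hc0 : ∀ j, 0 ≤ c j := fun j => Finset.sum_nonneg fun i _ => ha i j
  have haler : ∀ i j, a i j ≤ r i := fun i j =>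
    Finset.single_le_sum (fun j' _ => ha i j') (Finset.mem_univ j)
  have halec : ∀ i j, a i j ≤ c j := fun i j =>
    Finset.single_le_sum (fun i' _ => ha i' j) (Finset.mem_univ i)
  have he0 : 0 ≤ e := by
    rw [he]
    exact Finset.sum_nonneg fun i _ => Finset.sum_nonneg fun j _ => ha i j
  have har : ∀ (i : Fin v) (j : Fin w), r i = 0 → a i j = 0 := fun i j h =>
    le_antisymm (h ▸ haler i j) (ha i j)
  have hac : ∀ (i : Fin v) (j : Fin w), c j = 0 → a i j = 0 := fun i j h =>
    le_antisymm (h ▸ halec i j) (ha i j)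
  set P : Finset (Fin v × Fin w) := Finset.univ with hPdef
  set Q : ℝ := ∑ p ∈ P, a p.1 p.2 * r p.1 * c p.2 with hQdef
  set S : ℝ := ∑ p ∈ P, a p.1 p.2 * Real.sqrt (r p.1 * c p.2) with hSdef
  set T : ℝ := ∑ p ∈ P, a p.1 p.2 / Real.sqrt (r p.1 * c p.2) with hTdef
  have hQ0 : 0 ≤ Q := Finset.sum_nonneg fun p _ =>
    mul_nonneg (mul_nonneg (ha _ _) (hr0 _)) (hc0 _)
  have hS0 : 0 ≤ S := Finset.sum_nonneg fun p _ =>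
    mul_nonneg (ha _ _) (Real.sqrt_nonneg _)
  have hT0 : 0 ≤ T := Finset.sum_nonneg fun p _ =>
    div_nonneg (ha _ _) (Real.sqrt_nonneg _)
  have heP : e = ∑ p ∈ P, a p.1 p.2 := by
    rw [he, hPdef, ← Finset.univ_product_univ, Finset.sum_product]
  have hgoal : (∑ i, ∑ j, a i j * (∑ j', a i j') * (∑ i', a i' j)) = Q := by
    rw [hQdef, hPdef, ← Finset.univ_product_univ, Finset.sum_product]
  -- Cauchy-Schwarz 1 : S^2 ≤ e * Q
  have hCS1 : S ^ 2 ≤ e * Q := by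
    calc S ^ 2
        = (∑ p ∈ P, Real.sqrt (a p.1 p.2) * Real.sqrt (a p.1 p.2 * (r p.1 * c p.2))) ^ 2 := by
          rw [hSdef]
          congr 1
          exact Finset.sum_congr rfl fun p _ => sqrt_aux1 _ _ (ha _ _)
      _ ≤ (∑ p ∈ P, Real.sqrt (a p.1 p.2) ^ 2)
          * ∑ p ∈ P, Real.sqrt (a p.1 p.2 * (r p.1 * c p.2)) ^ 2 :=
          Finset.sum_mul_sq_le_sq_mul_sq _ _ _
      _ = e * Q := by
          rw [heP, hQdef]
          congr 1
          · exact Finset.sum_congr rfl fun p _ => Real.sq_sqrt (ha _ _)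
          · exact Finset.sum_congr rfl fun p _ => by
              rw [Real.sq_sqrt (mul_nonneg (ha _ _) (mul_nonneg (hr0 _) (hc0 _))), mul_assoc]
  -- Cauchy-Schwarz 2 : e^2 ≤ S * T
  have hCS2 : e ^ 2 ≤ S * T := by
    have hrc0 : ∀ p : Fin v × Fin w, r p.1 * c p.2 = 0 → a p.1 p.2 = 0 := by
      intro p h
      rcases mul_eq_zero.mp h with h1 | h1
      · exact har _ _ h1
      · exact hac _ _ h1
    calc e ^ 2
        = (∑ p ∈ P, Real.sqrt (a p.1 p.2 * Real.sqrt (r p.1 * c p.2))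
            * Real.sqrt (a p.1 p.2 / Real.sqrt (r p.1 * c p.2))) ^ 2 := by
          rw [heP]
          congr 1
          exact Finset.sum_congr rfl fun p _ =>
            sqrt_aux2 _ _ (ha _ _) (mul_nonneg (hr0 _) (hc0 _)) (hrc0 p)
      _ ≤ (∑ p ∈ P, Real.sqrt (a p.1 p.2 * Real.sqrt (r p.1 * c p.2)) ^ 2)
          * ∑ p ∈ P, Real.sqrt (a p.1 p.2 / Real.sqrt (r p.1 * c p.2)) ^ 2 :=
          Finset.sum_mul_sq_le_sq_mul_sq _ _ _
      _ = S * T := by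
          rw [hSdef, hTdef]
          congr 1
          · exact Finset.sum_congr rfl fun p _ =>
              Real.sq_sqrt (mul_nonneg (ha _ _) (Real.sqrt_nonneg _))
          · exact Finset.sum_congr rfl fun p _ =>
              Real.sq_sqrt (div_nonneg (ha _ _) (Real.sqrt_nonneg _))
  -- Cauchy-Schwarz 3 : T^2 ≤ v * w
  have hCS3 : T ^ 2 ≤ (v : ℝ) * w := by
    have step1 : T ^ 2 ≤ (∑ p ∈ P, a p.1 p.2 / r p.1) * ∑ p ∈ P, a p.1 p.2 / c p.2 := by
      calc T ^ 2
          = (∑ p ∈ P, Real.sqrt (a p.1 p.2 / r p.1) * Real.sqrt (a p.1 p.2 / c p.2)) ^ 2 := by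
            rw [hTdef]
            congr 1
            exact Finset.sum_congr rfl fun p _ =>
              sqrt_aux3 _ _ _ (ha _ _) (hr0 _) (hc0 _) (har _ _) (hac _ _)
        _ ≤ (∑ p ∈ P, Real.sqrt (a p.1 p.2 / r p.1) ^ 2)
            * ∑ p ∈ P, Real.sqrt (a p.1 p.2 / c p.2) ^ 2 :=
            Finset.sum_mul_sq_le_sq_mul_sq _ _ _
        _ = _ := by
            congr 1
            · exact Finset.sum_congr rfl fun p _ => Real.sq_sqrt (div_nonneg (ha _ _) (hr0 _))
            · exact Finset.sum_congr rfl fun p _ => Real.sq_sqrt (div_nonneg (ha _ _) (hc0 _))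
    have hsum1 : (∑ p ∈ P, a p.1 p.2 / r p.1) ≤ (v : ℝ) := by
      rw [hPdef, ← Finset.univ_product_univ, Finset.sum_product]
      calc (∑ i : Fin v, ∑ j : Fin w, a i j / r i) = ∑ i : Fin v, r i / r i := by
            refine Finset.sum_congr rfl fun i _ => ?_
            rw [← Finset.sum_div]
        _ ≤ ∑ _i : Fin v, (1 : ℝ) := by
            refine Finset.sum_le_sum fun i _ => ?_
            by_cases h : r i = 0
            · simp [h]
            · rw [div_self h]
        _ = (v : ℝ) := by simp
    have hsum2 : (∑ p ∈ P, a p.1 p.2 / c p.2) ≤ (w : ℝ) := by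
      rw [hPdef, ← Finset.univ_product_univ, Finset.sum_product, Finset.sum_comm]
      calc (∑ j : Fin w, ∑ i : Fin v, a i j / c j) = ∑ j : Fin w, c j / c j := by
            refine Finset.sum_congr rfl fun j _ => ?_
            rw [← Finset.sum_div]
        _ ≤ ∑ _j : Fin w, (1 : ℝ) := by
            refine Finset.sum_le_sum fun j _ => ?_
            by_cases h : c j = 0
            · simp [h]
            · rw [div_self h]
        _ = (w : ℝ) := by simp
    have h1 : 0 ≤ ∑ p ∈ P, a p.1 p.2 / c p.2 :=
      Finset.sum_nonneg fun p _ => div_nonneg (ha _ _) (hc0 _)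
    calc T ^ 2 ≤ _ := step1
      _ ≤ (v : ℝ) * w := mul_le_mul hsum1 hsum2 h1 (Nat.cast_nonneg v)
  -- combine
  rw [hgoal, ge_iff_le]
  have hvw : (0 : ℝ) < (v : ℝ) * w := by
    have h1 : (0:ℝ) < (v:ℝ) := by exact_mod_cast Nat.lt_of_lt_of_le Nat.zero_lt_one hv
    have h2 : (0:ℝ) < (w:ℝ) := by exact_mod_cast Nat.lt_of_lt_of_le Nat.zero_lt_one hw
    positivity
  rw [div_le_iff₀ hvw]
  rcases eq_or_lt_of_le he0 with heq | hpos
  · rw [← heq]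
    have : (0:ℝ)^3 = 0 := by norm_num
    rw [this]
    exact mul_nonneg hQ0 hvw.le
  · have h4 : e ^ 4 ≤ e * Q * ((v : ℝ) * w) := by
      calc e ^ 4 = (e ^ 2) ^ 2 := by ring
        _ ≤ (S * T) ^ 2 := pow_le_pow_left₀ (sq_nonneg e) hCS2 2
        _ = S ^ 2 * T ^ 2 := by ring
        _ ≤ (e * Q) * ((v : ℝ) * w) :=
            mul_le_mul hCS1 hCS3 (sq_nonneg T) (mul_nonneg he0 hQ0)
    nlinarith [h4, hpos]
end

section
/- Let G be a bipartite graph on vertex classes of sizes v and w with e edges, of minimum degree at least 2. Then the number of paths of length 3 in G (sequences of 4 distinct vertices x,y,z,t with consecutive adjacency) is at least e(e/v - 1)(e/w - 1). -/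
/-!
Count a path `x y z t` by its middle edge `yz`: in a triangle-free graph `x ≠ t` is automatic, so
there are exactly `(d y - 1) (d z - 1)` of them, and it suffices to sum over the `e` edges `yz` with
`y` on the left. By AM-GM over these edges, the sum is at least `e` times the product of the
geometric means of `d y - 1` and of `d z - 1`. As `x ↦ (x + 1) log x` is convex on `[1, ∞)`,
Jensen's inequality over the left class gives `∑ y, d y * log (d y - 1) ≥ e * log (e / v - 1)`,
i.e. the first geometric mean is at least `e / v - 1`; likewise the second is at least `e / w - 1`.
-/

open Finset Real

theorem ConvexOn.card_mul_map_average_le {ι : Type*} {t : Finset ι} {S : Set ℝ} {f : ℝ → ℝ}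
    (hf : ConvexOn ℝ S f) {p : ι → ℝ} (hp : ∀ i ∈ t, p i ∈ S) :
    #t * f ((∑ i ∈ t, p i) / #t) ≤ ∑ i ∈ t, f (p i) := by
  rcases t.eq_empty_or_nonempty with rfl | ht
  · simp
  have hc : (0 : ℝ) < #t := by exact_mod_cast ht.card_pos
  have h := hf.map_sum_le (w := fun _ => (#t : ℝ)⁻¹) (fun _ _ => by positivity)
    (by simp [hc.ne']) hp
  simp only [smul_eq_mul, ← mul_sum] at h
  calc _ ≤ (#t : ℝ) * ((#t : ℝ)⁻¹ * ∑ i ∈ t, f (p i)) := by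
        rw [div_eq_inv_mul]; gcongr
    _ = _ := by field_simp

theorem convexOn_add_one_mul_log : ConvexOn ℝ (Set.Ici 1) fun x : ℝ => (x + 1) * log x := by
  refine convexOn_of_hasDerivWithinAt2_nonneg (f' := fun x => log x + 1 + x⁻¹)
    (f'' := fun x => x⁻¹ - (x ^ 2)⁻¹) (convex_Ici 1) ?_ ?_ ?_ ?_
  · exact (continuousOn_id.add continuousOn_const).mul
      (continuousOn_log.mono fun x (hx : 1 ≤ x) => by simp; linarith)
  all_goals
    simp only [interior_Ici, Set.mem_Ioi]
    intro x (hx : 1 < x)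
    have hx0 : x ≠ 0 := by positivity
  · refine (((hasDerivAt_id' x).add_const 1).mul (hasDerivAt_log hx0)).hasDerivWithinAt.congr_deriv
      ?_
    field_simp
    ring
  · exact (((hasDerivAt_log hx0).add_const 1).add (hasDerivAt_inv hx0)).hasDerivWithinAt.congr_deriv
      (by ring)
  · rw [sub_nonneg]
    exact inv_anti₀ (by positivity) (by nlinarith)

theorem sum_mul_log_mean_sub_one_le {ι : Type*} (s : Finset ι) (d : ι → ℝ)
    (hd : ∀ i ∈ s, 2 ≤ d i) :
    (∑ i ∈ s, d i) * log ((∑ i ∈ s, d i) / #s - 1) ≤ ∑ i ∈ s, d i * log (d i - 1) := by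
  rcases s.eq_empty_or_nonempty with rfl | hs
  · simp
  have hc : (0 : ℝ) < #s := by exact_mod_cast hs.card_pos
  have h := convexOn_add_one_mul_log.card_mul_map_average_le (t := s) (p := fun i => d i - 1)
    fun i hi => by simp only [Set.mem_Ici]; linarith [hd i hi]
  simp only [sub_add_cancel, sum_sub_distrib, sum_const, nsmul_eq_mul, mul_one] at h
  rwa [sub_div, div_self hc.ne', sub_add_cancel, ← mul_assoc, mul_div_cancel₀ _ hc.ne'] at h

namespace SimpleGraph

variable {V : Type*} [Fintype V] {G : SimpleGraph V} [DecidableRel G.Adj]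

section Paths

variable [DecidableEq V]

variable (G) in
def pathsOfLengthThree : Finset (V × V × V × V) :=
  Finset.univ.filter fun p : V × V × V × V =>
    p.1 ≠ p.2.1 ∧ p.1 ≠ p.2.2.1 ∧ p.1 ≠ p.2.2.2 ∧
    p.2.1 ≠ p.2.2.1 ∧ p.2.1 ≠ p.2.2.2 ∧ p.2.2.1 ≠ p.2.2.2 ∧
    G.Adj p.1 p.2.1 ∧ G.Adj p.2.1 p.2.2.1 ∧ G.Adj p.2.2.1 p.2.2.2

theorem card_pathsOfLengthThree_filter_middle (h : G.CliqueFree 3) {y z : V} (hyz : G.Adj y z) :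
    #{p ∈ G.pathsOfLengthThree | (p.2.1, p.2.2.1) = (y, z)} =
      #((G.neighborFinset y).erase z ×ˢ (G.neighborFinset z).erase y) := by
  refine card_nbij' (fun p => (p.1, p.2.2.2)) (fun q => (q.1, y, z, q.2)) ?_ ?_ ?_ ?_
  · rintro ⟨x, y', z', t⟩ hp
    simp only [pathsOfLengthThree, coe_filter, mem_filter, mem_univ, true_and, Prod.mk.injEq,
      Set.mem_ofPred_eq] at hp
    obtain ⟨⟨-, hxz, -, -, hyt, -, hxy, -, hzt⟩, rfl, rfl⟩ := hp
    simp [hxz, hxy.symm, hzt, hyt.symm]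
  · rintro ⟨x, t⟩ hq
    simp only [coe_product, Set.mem_prod, coe_erase, Set.mem_sdiff, mem_coe, mem_neighborFinset,
      Set.mem_singleton_iff] at hq
    obtain ⟨⟨hyx, hxz⟩, hzt, hty⟩ := hq
    have hxt : x ≠ t := by
      rintro rfl
      exact h {y, z, x} (is3Clique_triple_iff.mpr ⟨hyz, hyx, hzt⟩)
    simp [pathsOfLengthThree, hyx.ne', hxz, hxt, hyz.ne, Ne.symm hty, hzt.ne, hyx.symm, hyz, hzt]
  · rintro ⟨x, y', z', t⟩ hp
    simp only [pathsOfLengthThree, coe_filter, mem_filter, mem_univ, true_and, Prod.mk.injEq,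
      Set.mem_ofPred_eq] at hp
    obtain ⟨-, rfl, rfl⟩ := hp
    rfl
  · intro q _
    rfl

theorem card_pathsOfLengthThree (h : G.CliqueFree 3) :
    #G.pathsOfLengthThree = ∑ q ∈ univ.filter (fun q : V × V => G.Adj q.1 q.2),
      (G.degree q.1 - 1) * (G.degree q.2 - 1) := by
  rw [card_eq_sum_card_fiberwise (f := fun p => (p.2.1, p.2.2.1))
    (t := univ.filter fun q : V × V => G.Adj q.1 q.2) fun p hp => by
      simp only [pathsOfLengthThree, coe_filter, mem_univ, true_and, Set.mem_ofPred_eq] at hp ⊢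
      exact hp.2.2.2.2.2.2.2.1]
  refine sum_congr rfl fun ⟨y, z⟩ hyz => ?_
  simp only [mem_filter, mem_univ, true_and] at hyz
  rw [card_pathsOfLengthThree_filter_middle h hyz, card_product,
    card_erase_of_mem (by simpa using hyz), card_erase_of_mem (by simpa using hyz.symm),
    card_neighborFinset_eq_degree, card_neighborFinset_eq_degree]

end Paths

section Bipartite

variable {s t : Finset V}

theorem IsBipartiteWith.sum_filter_adj_product_left {M : Type*} [AddCommMonoid M]
    (h : G.IsBipartiteWith s t) (f : V → V → M) :
    ∑ q ∈ s ×ˢ t with G.Adj q.1 q.2, f q.1 q.2 = ∑ y ∈ s, ∑ z ∈ G.neighborFinset y, f y z := by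
  rw [sum_filter, sum_product]
  refine sum_congr rfl fun y hy => ?_
  rw [isBipartiteWith_neighborFinset h hy, sum_filter]

theorem IsBipartiteWith.sum_filter_adj_product_right {M : Type*} [AddCommMonoid M]
    (h : G.IsBipartiteWith s t) (f : V → V → M) :
    ∑ q ∈ s ×ˢ t with G.Adj q.1 q.2, f q.1 q.2 = ∑ z ∈ t, ∑ y ∈ G.neighborFinset z, f y z := by
  rw [sum_filter, sum_product_right]
  refine sum_congr rfl fun z hz => ?_
  rw [isBipartiteWith_neighborFinset' h hz, sum_filter]

theorem IsBipartiteWith.card_filter_adj_product (h : G.IsBipartiteWith s t) :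
    #{q ∈ s ×ˢ t | G.Adj q.1 q.2} = #G.edgeFinset := by
  rw [card_eq_sum_ones, h.sum_filter_adj_product_left fun _ _ => 1,
    ← isBipartiteWith_sum_degrees_eq_card_edges h]
  simp

theorem IsBipartiteWith.one_le_card_edgeFinset_div_card_sub_one (h : G.IsBipartiteWith s t)
    (hs : ∀ x ∈ s, 2 ≤ G.degree x) (he : 0 < #G.edgeFinset) :
    1 ≤ (#G.edgeFinset : ℝ) / #s - 1 := by
  rw [← isBipartiteWith_sum_degrees_eq_card_edges h] at he ⊢
  have hs0 : (0 : ℝ) < #s := by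
    obtain ⟨x, hx, -⟩ := exists_ne_zero_of_sum_ne_zero he.ne'
    exact_mod_cast card_pos.mpr ⟨x, hx⟩
  have h2 : #s * 2 ≤ ∑ x ∈ s, G.degree x := by
    simpa using card_nsmul_le_sum s _ 2 hs
  rw [le_sub_iff_add_le, one_add_one_eq_two, le_div_iff₀ hs0, mul_comm]
  exact_mod_cast h2

theorem IsBipartiteWith.card_edgeFinset_mul_log_le_left (h : G.IsBipartiteWith s t)
    (hs : ∀ x ∈ s, 2 ≤ G.degree x) :
    #G.edgeFinset * log (#G.edgeFinset / #s - 1) ≤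
      ∑ q ∈ s ×ˢ t with G.Adj q.1 q.2, log (G.degree q.1 - 1) := by
  rw [h.sum_filter_adj_product_left fun y _ => log (G.degree y - 1),
    ← isBipartiteWith_sum_degrees_eq_card_edges h]
  simp only [sum_const, card_neighborFinset_eq_degree, nsmul_eq_mul, Nat.cast_sum]
  exact sum_mul_log_mean_sub_one_le s _ fun x hx => by exact_mod_cast hs x hx

theorem IsBipartiteWith.card_edgeFinset_mul_log_le_right (h : G.IsBipartiteWith s t)
    (ht : ∀ x ∈ t, 2 ≤ G.degree x) :
    #G.edgeFinset * log (#G.edgeFinset / #t - 1) ≤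
      ∑ q ∈ s ×ˢ t with G.Adj q.1 q.2, log (G.degree q.2 - 1) := by
  rw [h.sum_filter_adj_product_right fun _ z => log (G.degree z - 1),
    ← isBipartiteWith_sum_degrees_eq_card_edges' h]
  simp only [sum_const, card_neighborFinset_eq_degree, nsmul_eq_mul, Nat.cast_sum]
  exact sum_mul_log_mean_sub_one_le t _ fun x hx => by exact_mod_cast ht x hx

theorem IsBipartiteWith.card_edgeFinset_mul_le_sum (h : G.IsBipartiteWith s t)
    (hs : ∀ x ∈ s, 2 ≤ G.degree x) (ht : ∀ x ∈ t, 2 ≤ G.degree x) :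
    #G.edgeFinset * (#G.edgeFinset / #s - 1) * (#G.edgeFinset / #t - 1) ≤
      ∑ q ∈ s ×ˢ t with G.Adj q.1 q.2, ((G.degree q.1 : ℝ) - 1) * (G.degree q.2 - 1) := by
  set E := {q ∈ s ×ˢ t | G.Adj q.1 q.2}
  set e := #G.edgeFinset
  have hE : #E = e := h.card_filter_adj_product
  obtain he | he := Nat.eq_zero_or_pos e
  · simp [he, card_eq_zero.mp (hE.trans he)]
  have ha := h.one_le_card_edgeFinset_div_card_sub_one hs he
  have hb := h.symm.one_le_card_edgeFinset_div_card_sub_one ht he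
  have hdeg : ∀ q ∈ E, 1 < (G.degree q.1 : ℝ) ∧ 1 < (G.degree q.2 : ℝ) := fun q hq => by
    simp only [E, mem_filter, mem_product] at hq
    exact ⟨by exact_mod_cast hs _ hq.1.1, by exact_mod_cast ht _ hq.1.2⟩
  have hlog : log (e / #s - 1) + log (e / #t - 1) ≤
      (∑ q ∈ E, (log (G.degree q.1 - 1) + log (G.degree q.2 - 1))) / #E := by
    rw [hE, le_div_iff₀ (by exact_mod_cast he), sum_add_distrib]
    linarith [h.card_edgeFinset_mul_log_le_left hs, h.card_edgeFinset_mul_log_le_right ht]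
  calc (e : ℝ) * (e / #s - 1) * (e / #t - 1)
      = #E * exp (log (e / #s - 1) + log (e / #t - 1)) := by
        rw [exp_add, exp_log (by linarith), exp_log (by linarith), hE, mul_assoc]
    _ ≤ #E * exp ((∑ q ∈ E, (log (G.degree q.1 - 1) + log (G.degree q.2 - 1))) / #E) := by
        gcongr
    _ ≤ ∑ q ∈ E, exp (log (G.degree q.1 - 1) + log (G.degree q.2 - 1)) :=
        convexOn_exp.card_mul_map_average_le fun _ _ => Set.mem_univ _
    _ = ∑ q ∈ E, ((G.degree q.1 : ℝ) - 1) * (G.degree q.2 - 1) := by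
        refine sum_congr rfl fun q hq => ?_
        rw [exp_add, exp_log (by linarith [hdeg q hq]), exp_log (by linarith [hdeg q hq])]

theorem IsBipartiteWith.card_edgeFinset_mul_le_card_pathsOfLengthThree [DecidableEq V]
    (h : G.IsBipartiteWith s t) (hs : ∀ x ∈ s, 2 ≤ G.degree x) (ht : ∀ x ∈ t, 2 ≤ G.degree x) :
    #G.edgeFinset * (#G.edgeFinset / #s - 1) * (#G.edgeFinset / #t - 1) ≤
      (#G.pathsOfLengthThree : ℝ) := by
  calc _ ≤ ∑ q ∈ s ×ˢ t with G.Adj q.1 q.2, ((G.degree q.1 : ℝ) - 1) * (G.degree q.2 - 1) :=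
        h.card_edgeFinset_mul_le_sum hs ht
    _ = ∑ q ∈ s ×ˢ t with G.Adj q.1 q.2, (((G.degree q.1 - 1) * (G.degree q.2 - 1) : ℕ) : ℝ) := by
        refine sum_congr rfl fun q hq => ?_
        simp only [mem_filter, mem_product] at hq
        rw [Nat.cast_mul, Nat.cast_pred (zero_lt_two.trans_le (hs _ hq.1.1)),
          Nat.cast_pred (zero_lt_two.trans_le (ht _ hq.1.2))]
    _ ≤ ∑ q ∈ univ.filter (fun q : V × V => G.Adj q.1 q.2),
          (((G.degree q.1 - 1) * (G.degree q.2 - 1) : ℕ) : ℝ) :=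
        sum_le_sum_of_subset_of_nonneg (filter_subset_filter _ (subset_univ _)) fun _ _ _ => by
          positivity
    _ = #G.pathsOfLengthThree := by
        rw [card_pathsOfLengthThree (h.isBipartite.cliqueFree (by norm_num)), Nat.cast_sum]

end Bipartite

end SimpleGraph

open SimpleGraph in
theorem stmt_12 (v w : ℕ) (G : SimpleGraph (Fin v ⊕ Fin w)) [DecidableRel G.Adj]
    (hbip : ∀ x y, G.Adj x y → x.isLeft ≠ y.isLeft)
    (hdeg : ∀ x, 2 ≤ G.degree x)
    (e : ℕ) (he : e = G.edgeFinset.card) :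
    ((Finset.univ.filter
        (fun p : (Fin v ⊕ Fin w) × (Fin v ⊕ Fin w) × (Fin v ⊕ Fin w) × (Fin v ⊕ Fin w) =>
          p.1 ≠ p.2.1 ∧ p.1 ≠ p.2.2.1 ∧ p.1 ≠ p.2.2.2 ∧
          p.2.1 ≠ p.2.2.1 ∧ p.2.1 ≠ p.2.2.2 ∧ p.2.2.1 ≠ p.2.2.2 ∧
          G.Adj p.1 p.2.1 ∧ G.Adj p.2.1 p.2.2.1 ∧ G.Adj p.2.2.1 p.2.2.2)).card : ℝ) ≥
      e * ((e : ℝ) / v - 1) * ((e : ℝ) / w - 1) := by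
  have hG : G.IsBipartiteWith (univ.map Function.Embedding.inl : Finset (Fin v ⊕ Fin w))
      (univ.map Function.Embedding.inr : Finset (Fin v ⊕ Fin w)) := by
    refine ⟨disjoint_coe.mpr (disjoint_map_inl_map_inr _ _), fun x y hxy => ?_⟩
    have := hbip x y hxy
    cases x <;> cases y <;> simp_all
  have hbound := hG.card_edgeFinset_mul_le_card_pathsOfLengthThree (fun x _ => hdeg x)
    fun x _ => hdeg x
  simp only [card_map, card_univ, Fintype.card_fin, ← he] at hbound
  exact hbound
end

section
/- For all real v, w with v + w ≥ 2 and vw ≥ v + w - 1, the cubic e^3 - (v+w)e^2 + 2vwe - v^2w^2 (in the variable e) has negative discriminant, hence exactly one real root. -/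
/-- If the cubic x^3 - s x^2 + 2 p x - p^2 has nonpositive-free (negative) discriminant,
any two real roots coincide. -/
lemma cubic_root_unique (s p a b : ℝ)
    (hΔ : s^2*(2*p)^2 - 4*(2*p)^3 - 4*s^3*p^2 + 18*s*(2*p)*p^2 - 27*(p^2)^2 < 0)
    (h1 : a^3 - s*a^2 + 2*p*a - p^2 = 0)
    (h2 : b^3 - s*b^2 + 2*p*b - p^2 = 0) : a = b := by
  by_contra hne
  have hq : a^2 + a*b + b^2 - s*(a+b) + 2*p = 0 := by
    have h3 : (a-b) * (a^2 + a*b + b^2 - s*(a+b) + 2*p) = 0 := by linear_combination h1 - h2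
    rcases mul_eq_zero.1 h3 with h | h
    · exact absurd (sub_eq_zero.1 h) hne
    · exact h
  have key : s^2*(2*p)^2 - 4*(2*p)^3 - 4*s^3*p^2 + 18*s*(2*p)*p^2 - 27*(p^2)^2
      = ((a-b)*(a-(s-a-b))*(b-(s-a-b)))^2 := by
    linear_combination
      ((s^2*(2*p + (a*b + (a+b)*(s-a-b)))
        - 4*(4*p^2 + 2*p*(a*b + (a+b)*(s-a-b)) + (a*b + (a+b)*(s-a-b))^2)
        + 18*s*p^2)
       + (-4*s^3 + 18*s*(a*b + (a+b)*(s-a-b)) - 27*(p^2 + a*b*(s-a-b))) * a) * hq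
      - (-4*s^3 + 18*s*(a*b + (a+b)*(s-a-b)) - 27*(p^2 + a*b*(s-a-b))) * h1
  nlinarith [sq_nonneg ((a-b)*(a-(s-a-b))*(b-(s-a-b)))]

theorem stmt_16 (v w : ℝ) (hs : 2 ≤ v + w) (hp : v + w - 1 ≤ v * w) :
    -(v * w)^2 * (27 * (v * w)^2 + 4 * (v + w)^3 - 36 * (v + w) * (v * w)
        - 4 * (v + w)^2 + 32 * (v * w)) < 0 ∧
    ∃! e : ℝ, e^3 - (v + w) * e^2 + 2 * v * w * e - v^2 * w^2 = 0 := by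
  set s := v + w with hsdef
  set p := v * w with hpdef
  have hp1 : 1 ≤ p := by linarith
  have hD : 0 < 27 * p^2 + 4 * s^3 - 36 * s * p - 4 * s^2 + 32 * p := by
    nlinarith [mul_nonneg (by linarith : (0:ℝ) ≤ p - s + 1) (by nlinarith : (0:ℝ) ≤ 27*p - 9*s + 5),
      mul_nonneg (mul_nonneg (by linarith : (0:ℝ) ≤ s - 1) (by linarith : (0:ℝ) ≤ s - 1)) (by linarith : (0:ℝ) ≤ 4*s - 5)]
  have hΔ : s^2*(2*p)^2 - 4*(2*p)^3 - 4*s^3*p^2 + 18*s*(2*p)*p^2 - 27*(p^2)^2 < 0 := by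
    nlinarith [mul_pos (by nlinarith : (0:ℝ) < p^2) hD]
  refine ⟨by nlinarith [mul_pos (by nlinarith : (0:ℝ) < p^2) hD], ?_⟩
  -- existence via IVT
  have hcont : ContinuousOn (fun x : ℝ => x^3 - s*x^2 + 2*p*x - p^2) (Set.Icc 0 (s + p^2)) := by
    fun_prop
  have hle : (0:ℝ) ≤ s + p^2 := by nlinarith
  have hmem : (0:ℝ) ∈ Set.Icc ((fun x : ℝ => x^3 - s*x^2 + 2*p*x - p^2) 0)
      ((fun x : ℝ => x^3 - s*x^2 + 2*p*x - p^2) (s + p^2)) := by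
    constructor <;> simp only <;> nlinarith [sq_nonneg (s + p^2), sq_nonneg p]
  obtain ⟨e, -, he⟩ := intermediate_value_Icc hle hcont hmem
  refine ⟨e, ?_, ?_⟩
  · simp only at he
    linear_combination he
  · intro y hy
    simp only at he
    exact cubic_root_unique s p y e hΔ (by linear_combination hy) (by linear_combination he)
end

section
/- Let G be a bipartite graph on classes of sizes v and w with no cycle of length 4 or 6 and minimum degree at least 2. Then its number of edges satisfies e ≤ 2^{1/3}(vw)^{2/3}. -/
/-!
Orient every edge from `s` to `t`. For an edge `ab` the pairs `(y, x)` for which `y - b - a - x`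
is a path, together with `(a, b)` itself, number `W = (d a - 1)(d b - 1) + 1`, and without 4- and
6-cycles no pair of `s × t` arises from two edges, so `∑ W ≤ |s| |t|`. Degrees at least 2 give
`d a d b ≤ 2 W`, while `∑ 1 / d a ≤ |s|` and `∑ 1 / d b ≤ |t|`. Two Cauchy–Schwarz steps (Hölder)
then give `e³ ≤ (∑ W) (∑ W^(-1/2))² ≤ 2 (|s| |t|)²`.
-/

open Finset

namespace Finset

variable {ι : Type*} (s : Finset ι)

theorem card_pow_three_le_sum_sq_mul_sq_sum_inv {z : ι → ℝ} (hz : ∀ i ∈ s, 0 < z i) :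
    (#s : ℝ) ^ 3 ≤ (∑ i ∈ s, z i ^ 2) * (∑ i ∈ s, (z i)⁻¹) ^ 2 := by
  have harm : (#s : ℝ) ^ 2 ≤ (∑ i ∈ s, z i) * ∑ i ∈ s, (z i)⁻¹ := by
    simpa using sum_sq_le_sum_mul_sum_of_sq_le_mul s (r := fun _ ↦ (1 : ℝ))
      (fun i hi ↦ (hz i hi).le) (fun i hi ↦ (inv_pos.2 (hz i hi)).le)
      (fun i hi ↦ by simp [(hz i hi).ne'])
  have hqm : (∑ i ∈ s, z i) ^ 2 ≤ #s * ∑ i ∈ s, z i ^ 2 := sq_sum_le_card_mul_sum_sq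
  have hsum : 0 ≤ ∑ i ∈ s, z i := sum_nonneg fun i hi ↦ (hz i hi).le
  rcases (Nat.cast_nonneg #s : (0 : ℝ) ≤ #s).eq_or_lt with hn | hn
  · rw [← hn, zero_pow three_ne_zero]; positivity
  refine le_of_mul_le_mul_left ?_ hn
  calc (#s : ℝ) * #s ^ 3 = ((#s : ℝ) ^ 2) ^ 2 := by ring
    _ ≤ ((∑ i ∈ s, z i) * ∑ i ∈ s, (z i)⁻¹) ^ 2 := by gcongr
    _ = (∑ i ∈ s, z i) ^ 2 * (∑ i ∈ s, (z i)⁻¹) ^ 2 := by ring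
    _ ≤ (#s * ∑ i ∈ s, z i ^ 2) * (∑ i ∈ s, (z i)⁻¹) ^ 2 := by gcongr
    _ = #s * ((∑ i ∈ s, z i ^ 2) * (∑ i ∈ s, (z i)⁻¹) ^ 2) := by ring

theorem sq_sum_inv_le_mul_sum_inv_mul_sum_inv {c : ℝ} {x y z : ι → ℝ}
    (hx : ∀ i ∈ s, 0 < x i) (hy : ∀ i ∈ s, 0 < y i) (hxyz : ∀ i ∈ s, x i * y i ≤ c * z i ^ 2) :
    (∑ i ∈ s, (z i)⁻¹) ^ 2 ≤ c * (∑ i ∈ s, (x i)⁻¹) * ∑ i ∈ s, (y i)⁻¹ := by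
  have hpos : ∀ i ∈ s, 0 < c ∧ 0 < z i ^ 2 := fun i hi ↦ by
    have h := (mul_pos (hx i hi) (hy i hi)).trans_le (hxyz i hi)
    have hc := pos_of_mul_pos_left h (sq_nonneg _)
    exact ⟨hc, pos_of_mul_pos_right h hc.le⟩
  have h := sum_sq_le_sum_mul_sum_of_sq_le_mul s (f := fun i ↦ c * (x i)⁻¹)
    (fun i hi ↦ mul_nonneg (hpos i hi).1.le (inv_pos.2 (hx i hi)).le)
    (fun i hi ↦ (inv_pos.2 (hy i hi)).le) fun i hi ↦ by
      rw [inv_pow, mul_assoc, ← mul_inv, ← div_eq_mul_inv, inv_eq_one_div,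
        div_le_div_iff₀ (hpos i hi).2 (mul_pos (hx i hi) (hy i hi)), one_mul]
      exact hxyz i hi
  rwa [← mul_sum] at h

theorem card_pow_three_le_of_two_le {x y : ι → ℝ} (hx : ∀ i ∈ s, 2 ≤ x i) (hy : ∀ i ∈ s, 2 ≤ y i) :
    (#s : ℝ) ^ 3 ≤
      2 * (∑ i ∈ s, ((x i - 1) * (y i - 1) + 1)) * (∑ i ∈ s, (x i)⁻¹) * ∑ i ∈ s, (y i)⁻¹ := by
  have hW : ∀ i ∈ s, 0 < (x i - 1) * (y i - 1) + 1 := fun i hi ↦ by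
    nlinarith [hx i hi, hy i hi]
  let z : ι → ℝ := fun i ↦ √((x i - 1) * (y i - 1) + 1)
  have hz : ∀ i ∈ s, z i ^ 2 = (x i - 1) * (y i - 1) + 1 := fun i hi ↦ Real.sq_sqrt (hW i hi).le
  calc (#s : ℝ) ^ 3 ≤ (∑ i ∈ s, z i ^ 2) * (∑ i ∈ s, (z i)⁻¹) ^ 2 :=
        card_pow_three_le_sum_sq_mul_sq_sum_inv s fun i hi ↦ Real.sqrt_pos.2 (hW i hi)
    _ ≤ (∑ i ∈ s, ((x i - 1) * (y i - 1) + 1)) * (2 * (∑ i ∈ s, (x i)⁻¹) * ∑ i ∈ s, (y i)⁻¹) := by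
        rw [sum_congr rfl hz]
        gcongr
        · exact sum_nonneg fun i hi ↦ (hW i hi).le
        · refine sq_sum_inv_le_mul_sum_inv_mul_sum_inv s (fun i hi ↦ by linarith [hx i hi])
            (fun i hi ↦ by linarith [hy i hi]) fun i hi ↦ ?_
          rw [hz i hi]
          nlinarith [mul_nonneg (sub_nonneg.2 (hx i hi)) (sub_nonneg.2 (hy i hi))]
    _ = _ := by ring

end Finset

theorem le_two_rpow_mul_rpow_of_pow_three_le {e m : ℝ} (he : 0 ≤ e) (hm : 0 ≤ m)
    (h : e ^ 3 ≤ 2 * m ^ 2) : e ≤ 2 ^ ((1 : ℝ) / 3) * m ^ ((2 : ℝ) / 3) := by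
  calc e = (e ^ 3) ^ ((1 : ℝ) / 3) := by
        rw [← Real.rpow_natCast, ← Real.rpow_mul he]; norm_num
    _ ≤ (2 * m ^ 2) ^ ((1 : ℝ) / 3) := by gcongr
    _ = 2 ^ ((1 : ℝ) / 3) * m ^ ((2 : ℝ) / 3) := by
        rw [Real.mul_rpow zero_le_two (by positivity), ← Real.rpow_natCast, ← Real.rpow_mul hm]
        norm_num

namespace SimpleGraph

variable {V : Type*} {G : SimpleGraph V}

theorem eq_or_eq_of_square
    (h4 : ∀ (x) (c : G.Walk x x), c.IsCycle → c.length ≠ 4) {a b c d : V}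
    (hab : G.Adj a b) (hbc : G.Adj b c) (hcd : G.Adj c d) (hda : G.Adj d a) :
    a = c ∨ b = d := by
  by_contra! hne
  refine h4 a (.cons hab (.cons hbc (.cons hcd (.cons hda .nil)))) ?_ rfl
  have := hab.ne; have := hbc.ne; have := hcd.ne; have := hda.ne
  simp [Walk.isCycle_def, Walk.isTrail_def]
  aesop

theorem false_of_hexagon
    (h6 : ∀ (x) (c : G.Walk x x), c.IsCycle → c.length ≠ 6) {a b c d e f : V}
    (hab : G.Adj a b) (hbc : G.Adj b c) (hcd : G.Adj c d)
    (hde : G.Adj d e) (hef : G.Adj e f) (hfa : G.Adj f a)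
    (hac : a ≠ c) (had : a ≠ d) (hae : a ≠ e) (hbd : b ≠ d) (hbe : b ≠ e) (hbf : b ≠ f)
    (hce : c ≠ e) (hcf : c ≠ f) (hdf : d ≠ f) : False := by
  refine h6 a (.cons hab (.cons hbc (.cons hcd (.cons hde (.cons hef (.cons hfa .nil)))))) ?_ rfl
  have := hab.ne; have := hbc.ne; have := hcd.ne; have := hde.ne; have := hef.ne; have := hfa.ne
  simp [Walk.isCycle_def, Walk.isTrail_def]
  aesop

variable [Fintype V] [DecidableRel G.Adj]

theorem sum_interedges_fst {M : Type*} [AddCommMonoid M] {s t : Finset V}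
    (h : G.IsBipartiteWith s t) (f : V → M) :
    ∑ p ∈ G.interedges s t, f p.1 = ∑ a ∈ s, G.degree a • f a := by
  rw [interedges_def, sum_filter, sum_product]
  refine sum_congr rfl fun a ha ↦ ?_
  dsimp only
  rw [← sum_filter, sum_const, ← isBipartiteWith_neighborFinset h ha, card_neighborFinset_eq_degree]

theorem sum_interedges_snd {M : Type*} [AddCommMonoid M] {s t : Finset V}
    (h : G.IsBipartiteWith s t) (f : V → M) :
    ∑ p ∈ G.interedges s t, f p.2 = ∑ b ∈ t, G.degree b • f b := by
  rw [interedges_def, sum_filter, sum_product_right]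
  refine sum_congr rfl fun b hb ↦ ?_
  dsimp only
  rw [← sum_filter, sum_const, ← isBipartiteWith_neighborFinset' h hb,
    card_neighborFinset_eq_degree]

theorem card_interedges_eq_card_edgeFinset {s t : Finset V} (h : G.IsBipartiteWith s t) :
    #(G.interedges s t) = #G.edgeFinset := by
  rw [card_eq_sum_ones, sum_interedges_fst h (fun _ ↦ 1)]
  simpa using isBipartiteWith_sum_degrees_eq_card_edges h

theorem sum_inv_degree_fst_le {s t : Finset V} (h : G.IsBipartiteWith s t) :
    ∑ p ∈ G.interedges s t, (G.degree p.1 : ℝ)⁻¹ ≤ #s := by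
  rw [sum_interedges_fst h fun a ↦ (G.degree a : ℝ)⁻¹, card_eq_sum_ones, Nat.cast_sum]
  exact sum_le_sum fun a _ ↦ by
    simpa only [nsmul_eq_mul, Nat.cast_one] using mul_inv_le_one (a := (G.degree a : ℝ))

theorem sum_inv_degree_snd_le {s t : Finset V} (h : G.IsBipartiteWith s t) :
    ∑ p ∈ G.interedges s t, (G.degree p.2 : ℝ)⁻¹ ≤ #t := by
  rw [sum_interedges_snd h fun b ↦ (G.degree b : ℝ)⁻¹, card_eq_sum_ones, Nat.cast_sum]
  exact sum_le_sum fun b _ ↦ by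
    simpa only [nsmul_eq_mul, Nat.cast_one] using mul_inv_le_one (a := (G.degree b : ℝ))

variable [DecidableEq V]

variable (G) in
def pathEnds (a b : V) : Finset (V × V) :=
  insert (a, b) (((G.neighborFinset b).erase a) ×ˢ ((G.neighborFinset a).erase b))

theorem card_pathEnds {a b : V} (hab : G.Adj a b) :
    #(G.pathEnds a b) = (G.degree a - 1) * (G.degree b - 1) + 1 := by
  rw [pathEnds, card_insert_of_notMem (by simp), card_product, mul_comm,
    card_erase_of_mem (by simpa using hab), card_erase_of_mem (by simpa using hab.symm),
    card_neighborFinset_eq_degree, card_neighborFinset_eq_degree]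

theorem pathEnds_subset_product {s t : Finset V} (h : G.IsBipartiteWith s t) {a b : V}
    (ha : a ∈ s) (hab : G.Adj a b) : G.pathEnds a b ⊆ s ×ˢ t := by
  have hb : b ∈ t := h.mem_of_mem_adj ha hab
  simp only [pathEnds, insert_subset_iff, mem_product, ha, hb, true_and]
  intro p hp
  simp only [mem_product, mem_erase, mem_neighborFinset] at hp
  exact mem_product.2 ⟨h.mem_of_mem_adj' hb hp.1.2.symm, h.mem_of_mem_adj ha hp.2.2⟩

theorem eq_of_mem_pathEnds_of_adj (h4 : ∀ (x) (c : G.Walk x x), c.IsCycle → c.length ≠ 4)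
    {a b y x : V} (hab : G.Adj a b) (hyx : G.Adj y x) (hp : (y, x) ∈ G.pathEnds a b) :
    (y, x) = (a, b) := by
  simp only [pathEnds, mem_insert, mem_product, mem_erase, mem_neighborFinset] at hp
  obtain hp | ⟨⟨hya, hby⟩, hxb, hax⟩ := hp
  · exact hp
  · obtain h | h := eq_or_eq_of_square h4 hby.symm hab.symm hax hyx.symm
    exacts [(hya h).elim, (hxb h.symm).elim]

theorem eq_of_mem_pathEnds_of_mem_pathEnds {s t : Finset V} (h : G.IsBipartiteWith s t)
    (h4 : ∀ (x) (c : G.Walk x x), c.IsCycle → c.length ≠ 4)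
    (h6 : ∀ (x) (c : G.Walk x x), c.IsCycle → c.length ≠ 6)
    {a b a' b' : V} (ha : a ∈ s) (hab : G.Adj a b) (ha' : a' ∈ s) (hab' : G.Adj a' b')
    {p : V × V} (hp : p ∈ G.pathEnds a b) (hp' : p ∈ G.pathEnds a' b') :
    (a, b) = (a', b') := by
  rcases mem_insert.1 hp with rfl | hp
  · exact eq_of_mem_pathEnds_of_adj h4 hab' hab hp'
  rcases mem_insert.1 hp' with rfl | hp'
  · exact (eq_of_mem_pathEnds_of_adj h4 hab hab' (mem_insert_of_mem hp)).symm
  obtain ⟨y, x⟩ := p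
  simp only [mem_product, mem_erase, mem_neighborFinset] at hp hp'
  obtain ⟨⟨hya, hby⟩, hxb, hax⟩ := hp
  obtain ⟨⟨hya', hby'⟩, hxb', hax'⟩ := hp'
  by_cases haa : a = a'
  · subst haa
    obtain h | h := eq_or_eq_of_square h4 hby.symm hab.symm hab' hby'
    exacts [(hya h).elim, by rw [h]]
  by_cases hbb : b = b'
  · subst hbb
    obtain h | h := eq_or_eq_of_square h4 hab.symm hax hax'.symm hab'
    exacts [(hxb h.symm).elim, (haa h).elim]
  have hb : b ∈ t := h.mem_of_mem_adj ha hab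
  have hx : x ∈ t := h.mem_of_mem_adj ha hax
  have hb' : b' ∈ t := h.mem_of_mem_adj ha' hab'
  have hy : y ∈ s := h.mem_of_mem_adj' hb hby.symm
  have hst : Disjoint (s : Set V) t := h.disjoint
  exact (false_of_hexagon h6 hby.symm hab.symm hax hax'.symm hab' hby' hya (hst.ne_of_mem hy hx)
    hya' (Ne.symm hxb) (hst.ne_of_mem ha' hb).symm hbb haa (hst.ne_of_mem ha hb') hxb').elim

theorem sum_card_pathEnds_le {s t : Finset V} (h : G.IsBipartiteWith s t)
    (h4 : ∀ (x) (c : G.Walk x x), c.IsCycle → c.length ≠ 4)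
    (h6 : ∀ (x) (c : G.Walk x x), c.IsCycle → c.length ≠ 6) :
    ∑ p ∈ G.interedges s t, ((G.degree p.1 - 1) * (G.degree p.2 - 1) + 1) ≤ #s * #t := by
  have hdisj : (G.interedges s t : Set (V × V)).PairwiseDisjoint fun p ↦ G.pathEnds p.1 p.2 := by
    rintro ⟨a, b⟩ hp ⟨a', b'⟩ hp' hne
    rw [mem_coe, mk_mem_interedges_iff] at hp hp'
    exact Finset.disjoint_left.2 fun q hq hq' ↦
      hne (eq_of_mem_pathEnds_of_mem_pathEnds h h4 h6 hp.1 hp.2.2 hp'.1 hp'.2.2 hq hq')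
  calc ∑ p ∈ G.interedges s t, ((G.degree p.1 - 1) * (G.degree p.2 - 1) + 1)
      = #((G.interedges s t).biUnion fun p ↦ G.pathEnds p.1 p.2) := by
        rw [card_biUnion hdisj]
        refine sum_congr rfl fun p hp ↦ (card_pathEnds ?_).symm
        exact (G.mem_interedges_iff.1 hp).2.2
    _ ≤ #(s ×ˢ t) := by
        refine card_le_card (biUnion_subset.2 fun p hp ↦ ?_)
        rw [mem_interedges_iff] at hp
        exact pathEnds_subset_product h hp.1 hp.2.2
    _ = #s * #t := card_product s t

theorem card_edgeFinset_pow_three_le {s t : Finset V} (h : G.IsBipartiteWith s t)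
    (h4 : ∀ (x) (c : G.Walk x x), c.IsCycle → c.length ≠ 4)
    (h6 : ∀ (x) (c : G.Walk x x), c.IsCycle → c.length ≠ 6) (hdeg : ∀ x, 2 ≤ G.degree x) :
    (#G.edgeFinset : ℝ) ^ 3 ≤ 2 * (#s * #t) ^ 2 := by
  have h1 : ∀ x, 1 ≤ G.degree x := fun x ↦ one_le_two.trans (hdeg x)
  have hpaths : ∑ p ∈ G.interedges s t, (((G.degree p.1 : ℝ) - 1) * (G.degree p.2 - 1) + 1)
      ≤ #s * #t := by
    calc ∑ p ∈ G.interedges s t, (((G.degree p.1 : ℝ) - 1) * (G.degree p.2 - 1) + 1)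
        = ((∑ p ∈ G.interedges s t, ((G.degree p.1 - 1) * (G.degree p.2 - 1) + 1) : ℕ) : ℝ) := by
          rw [Nat.cast_sum]
          refine sum_congr rfl fun p _ ↦ ?_
          push_cast [Nat.cast_sub (h1 p.1), Nat.cast_sub (h1 p.2)]
          rfl
      _ ≤ #s * #t := mod_cast sum_card_pathEnds_le h h4 h6
  have hs := sum_inv_degree_fst_le h
  have ht := sum_inv_degree_snd_le h
  rw [← card_interedges_eq_card_edgeFinset h]
  calc (#(G.interedges s t) : ℝ) ^ 3
      ≤ 2 * (∑ p ∈ G.interedges s t, (((G.degree p.1 : ℝ) - 1) * (G.degree p.2 - 1) + 1)) *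
          (∑ p ∈ G.interedges s t, (G.degree p.1 : ℝ)⁻¹) *
          ∑ p ∈ G.interedges s t, (G.degree p.2 : ℝ)⁻¹ :=
        card_pow_three_le_of_two_le _ (fun p _ ↦ mod_cast hdeg p.1) fun p _ ↦ mod_cast hdeg p.2
    _ ≤ 2 * (#s * #t) * #s * #t := by
        gcongr
    _ = 2 * (#s * #t) ^ 2 := by ring

end SimpleGraph

theorem stmt_18 (v w : ℕ) (G : SimpleGraph (Fin v ⊕ Fin w)) [DecidableRel G.Adj]
    (hbip : ∀ x y, G.Adj x y → x.isLeft ≠ y.isLeft)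
    (h4 : ∀ (x) (c : G.Walk x x), c.IsCycle → c.length ≠ 4)
    (h6 : ∀ (x) (c : G.Walk x x), c.IsCycle → c.length ≠ 6)
    (hdeg : ∀ x, 2 ≤ G.degree x)
    (e : ℕ) (he : e = G.edgeFinset.card) :
    (e : ℝ) ≤ 2 ^ ((1 : ℝ) / 3) * ((v : ℝ) * w) ^ ((2 : ℝ) / 3) := by
  have hG : G.IsBipartiteWith ↑(univ.map .inl : Finset (Fin v ⊕ Fin w))
      ↑(univ.map .inr : Finset (Fin v ⊕ Fin w)) := by
    refine ⟨by simpa using Set.isCompl_range_inl_range_inr.disjoint, fun x y hxy ↦ ?_⟩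
    have := hbip x y hxy
    rcases x with x | x <;> rcases y with y | y <;> simp_all
  have key := SimpleGraph.card_edgeFinset_pow_three_le hG h4 h6 hdeg
  simp only [card_map, card_univ, Fintype.card_fin] at key
  subst he
  exact le_two_rpow_mul_rpow_of_pow_three_le (by positivity) (by positivity) (mod_cast key)
end

section
/- For real v, w ≥ 1 with v ≤ w^2/4 and w ≤ v^2/4, one has P(v, w, 2^{1/3}(vw)^{2/3}) ≥ 0, where P(v,w,e) = e^3 - (v+w)e^2 + 2vwe - v^2w^2. Indeed P(v,w,2^{1/3}(vw)^{2/3}) = (vw)^{4/3}(w^{2/3} - 2^{2/3}v^{1/3})(v^{2/3} - 2^{2/3}w^{1/3}). -/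
theorem stmt_19 (v w : ℝ) (hv : 1 ≤ v) (hw : 1 ≤ w)
    (hvw : v ≤ w^2 / 4) (hwv : w ≤ v^2 / 4) :
    (2 ^ ((1:ℝ)/3) * (v * w) ^ ((2:ℝ)/3))^3
        - (v + w) * (2 ^ ((1:ℝ)/3) * (v * w) ^ ((2:ℝ)/3))^2
        + 2 * v * w * (2 ^ ((1:ℝ)/3) * (v * w) ^ ((2:ℝ)/3)) - v^2 * w^2 ≥ 0 ∧
    (2 ^ ((1:ℝ)/3) * (v * w) ^ ((2:ℝ)/3))^3
        - (v + w) * (2 ^ ((1:ℝ)/3) * (v * w) ^ ((2:ℝ)/3))^2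
        + 2 * v * w * (2 ^ ((1:ℝ)/3) * (v * w) ^ ((2:ℝ)/3)) - v^2 * w^2 =
      (v * w) ^ ((4:ℝ)/3) * (w ^ ((2:ℝ)/3) - 2 ^ ((2:ℝ)/3) * v ^ ((1:ℝ)/3))
        * (v ^ ((2:ℝ)/3) - 2 ^ ((2:ℝ)/3) * w ^ ((1:ℝ)/3)) := by
  have hv0 : (0:ℝ) ≤ v := by linarith
  have hw0 : (0:ℝ) ≤ w := by linarith
  have pown : ∀ (n : ℕ) (x : ℝ), 0 ≤ x → x ^ ((n:ℝ)/3) = (x ^ ((1:ℝ)/3))^n := by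
    intro n x hx
    rw [← Real.rpow_natCast (x ^ ((1:ℝ)/3)) n, ← Real.rpow_mul hx]
    ring_nf
  set a := v ^ ((1:ℝ)/3) with ha
  set b := w ^ ((1:ℝ)/3) with hb
  set c := (2:ℝ) ^ ((1:ℝ)/3) with hc
  have ha0 : 0 ≤ a := Real.rpow_nonneg hv0 _
  have hb0 : 0 ≤ b := Real.rpow_nonneg hw0 _
  have hc0 : 0 ≤ c := Real.rpow_nonneg (by norm_num) _
  have ha3 : a^3 = v := by rw [ha, ← pown 3 v hv0]; norm_num
  have hb3 : b^3 = w := by rw [hb, ← pown 3 w hw0]; norm_num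
  have hc3 : c^3 = 2 := by rw [hc, ← pown 3 2 (by norm_num)]; norm_num
  have hv23 : v ^ ((2:ℝ)/3) = a^2 := by
    rw [show ((2:ℝ)/3) = ((2:ℕ):ℝ)/3 by norm_num, pown 2 v hv0]
  have hw23 : w ^ ((2:ℝ)/3) = b^2 := by
    rw [show ((2:ℝ)/3) = ((2:ℕ):ℝ)/3 by norm_num, pown 2 w hw0]
  have h223 : (2:ℝ) ^ ((2:ℝ)/3) = c^2 := by
    rw [show ((2:ℝ)/3) = ((2:ℕ):ℝ)/3 by norm_num, pown 2 2 (by norm_num)]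
  have hvw23 : (v*w) ^ ((2:ℝ)/3) = a^2 * b^2 := by
    rw [Real.mul_rpow hv0 hw0, hv23, hw23]
  have hvw43 : (v*w) ^ ((4:ℝ)/3) = a^4 * b^4 := by
    rw [Real.mul_rpow hv0 hw0,
      show ((4:ℝ)/3) = ((4:ℕ):ℝ)/3 by norm_num, pown 4 v hv0, pown 4 w hw0]
  -- factor nonnegativity
  have key : ∀ x y : ℝ, 0 ≤ x → 0 ≤ y → 4*x ≤ y^2 →
      c^2 * x ^ ((1:ℝ)/3) ≤ (y ^ ((1:ℝ)/3))^2 := by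
    intro x y hx hy hxy
    have h1 : (4*x) ^ ((1:ℝ)/3) ≤ (y^2) ^ ((1:ℝ)/3) :=
      Real.rpow_le_rpow (by positivity) hxy (by norm_num)
    have h2 : (4*x) ^ ((1:ℝ)/3) = c^2 * x ^ ((1:ℝ)/3) := by
      rw [Real.mul_rpow (by norm_num) hx, show (4:ℝ) = 2^2 by norm_num,
        ← Real.rpow_natCast (2:ℝ) 2, ← Real.rpow_mul (by norm_num), hc,
        ← Real.rpow_natCast ((2:ℝ) ^ ((1:ℝ)/3)) 2, ← Real.rpow_mul (by norm_num)]
      norm_num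
    have h3 : (y^2) ^ ((1:ℝ)/3) = (y ^ ((1:ℝ)/3))^2 := by
      rw [← Real.rpow_natCast y 2, ← Real.rpow_mul hy,
        show ((2:ℕ):ℝ) * ((1:ℝ)/3) = ((2:ℕ):ℝ)/3 by norm_num, pown 2 y hy]
    rw [← h2, ← h3]; exact h1
  have hf1 : 0 ≤ b^2 - c^2 * a := by
    have := key v w hv0 hw0 (by linarith)
    linarith
  have hf2 : 0 ≤ a^2 - c^2 * b := by
    have := key w v hw0 hv0 (by linarith)
    linarith
  have heq : (c * ((v*w) ^ ((2:ℝ)/3)))^3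
        - (v + w) * (c * ((v*w) ^ ((2:ℝ)/3)))^2
        + 2 * v * w * (c * ((v*w) ^ ((2:ℝ)/3))) - v^2 * w^2 =
      (v * w) ^ ((4:ℝ)/3) * (w ^ ((2:ℝ)/3) - 2 ^ ((2:ℝ)/3) * a)
        * (v ^ ((2:ℝ)/3) - 2 ^ ((2:ℝ)/3) * b) := by
    rw [hvw23, hvw43, hv23, hw23, h223, ← ha3, ← hb3]
    linear_combination (a^6*b^6 - c*a^5*b^5) * hc3
  constructor
  · rw [heq, hw23, hv23, h223]
    have : 0 ≤ a^4 * b^4 := by positivity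
    nlinarith [mul_nonneg hf1 hf2]
  · exact heq
end
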